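/- arXiv:1710.09576 — 9 statements merged into one kernel-verified Lean document; each statement's English description precedes it below -/
import Mathlib

section
/- For complex numbers s, p, the pair (s,p) lies in the symmetrized bidisc G₂ if and only if |s - s̄·p| < 1 - |p|². -/
open Complex ComplexConjugate

def G2 : Set (ℂ × ℂ) :=
  {w | ∃ z₁ z₂ : ℂ, ‖z₁‖ < 1 ∧ ‖z₂‖ < 1 ∧ w = (z₁ + z₂, z₁ * z₂)}

/-!
Write `(s, p) = (z + w, z w)`, which is always possible since `X² - s X + p` has roots in `ℂ`.
The identity
`(1 - |p|²)² - |s - s̄ p|² = (1 - |z|²) (1 - |w|²) |1 - z̄ w|²`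
shows that `|s - s̄ p| < 1 - |p|²` forces `1 - |z|²` and `1 - |w|²` to have the same strict sign,
and both cannot be negative because `|z w| = |p| < 1`. Conversely, for `z, w` in the disc the
right-hand side is positive.
-/

theorem exists_add_eq_and_mul_eq {K : Type*} [Field K] [IsAlgClosed K] (s p : K) :
    ∃ z w : K, z + w = s ∧ z * w = p := by
  open Polynomial in
  obtain ⟨z, hz⟩ := IsAlgClosed.exists_root (C 1 * X ^ 2 + C (-s) * X + C p)
    (by rw [degree_quadratic one_ne_zero]; decide)
  refine ⟨z, s - z, add_sub_cancel z s, ?_⟩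
  simp only [IsRoot, eval_add, eval_mul, eval_pow, eval_C, eval_X] at hz
  linear_combination -hz

theorem sq_one_sub_norm_mul_sq_sub_norm_sq (z w : ℂ) :
    (1 - ‖z * w‖ ^ 2) ^ 2 - ‖(z + w) - conj (z + w) * (z * w)‖ ^ 2 =
      (1 - ‖z‖ ^ 2) * (1 - ‖w‖ ^ 2) * ‖1 - conj z * w‖ ^ 2 := by
  apply ofReal_injective
  push_cast
  simp only [← mul_conj', map_sub, map_add, map_mul, map_one, conj_conj]
  ring

theorem norm_sub_conj_mul_lt_iff (z w : ℂ) :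
    ‖(z + w) - conj (z + w) * (z * w)‖ < 1 - ‖z * w‖ ^ 2 ↔ ‖z‖ < 1 ∧ ‖w‖ < 1 := by
  have key := sq_one_sub_norm_mul_sq_sub_norm_sq z w
  have hN := norm_nonneg ((z + w) - conj (z + w) * (z * w))
  rw [norm_mul] at key ⊢
  have ha := norm_nonneg z
  have hb := norm_nonneg w
  constructor
  · intro h
    have hab : ‖z‖ * ‖w‖ < 1 := by nlinarith
    have hprod : 0 < (1 - ‖z‖ ^ 2) * (1 - ‖w‖ ^ 2) := by
      refine pos_of_mul_pos_left (b := ‖1 - conj z * w‖ ^ 2) ?_ (sq_nonneg _)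
      nlinarith
    refine ⟨?_, ?_⟩ <;> by_contra! h1
    · have hw1 : 1 < ‖w‖ := by nlinarith [mul_le_mul h1 h1 zero_le_one ha]
      nlinarith
    · have hz1 : 1 < ‖z‖ := by nlinarith [mul_le_mul h1 h1 zero_le_one hb]
      nlinarith
  · rintro ⟨hz, hw⟩
    have hzw : ‖z‖ * ‖w‖ < 1 := mul_lt_one_of_nonneg_of_lt_one_left ha hz hw.le
    have hD : 0 < ‖1 - conj z * w‖ := by
      refine norm_pos_iff.2 (sub_ne_zero.2 fun h => hzw.ne ?_)
      rw [← RCLike.norm_conj z, ← norm_mul, ← h, norm_one]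
    have hpos : 0 < 1 - (‖z‖ * ‖w‖) ^ 2 := by nlinarith [mul_nonneg ha hb]
    refine lt_of_pow_lt_pow_left₀ 2 hpos.le ?_
    nlinarith [mul_pos (mul_pos (by nlinarith : 0 < 1 - ‖z‖ ^ 2) (by nlinarith : 0 < 1 - ‖w‖ ^ 2))
      (pow_pos hD 2)]

theorem stmt_0 (s p : ℂ) :
    (s, p) ∈ G2 ↔ ‖s - conj s * p‖ < 1 - ‖p‖ ^ 2 := by
  constructor
  · rintro ⟨z, w, hz, hw, h⟩
    obtain ⟨rfl, rfl⟩ := Prod.ext_iff.1 h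
    exact (norm_sub_conj_mul_lt_iff z w).2 ⟨hz, hw⟩
  · intro h
    obtain ⟨z, w, rfl, rfl⟩ := exists_add_eq_and_mul_eq s p
    obtain ⟨hz, hw⟩ := (norm_sub_conj_mul_lt_iff z w).1 h
    exact ⟨z, w, hz, hw, rfl⟩
end

section
/- If h ∈ Aut(D) is a Möbius automorphism of the unit disc, then the map H_h defined by H_h(λ₁+λ₂, λ₁λ₂) = (h(λ₁)+h(λ₂), h(λ₁)h(λ₂)) is a well-defined biholomorphic self-map of the symmetrized bidisc G₂. -/
open Complex ComplexConjugate

/-!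
By the Schwarz lemma every automorphism of the disc is `z ↦ ω (z - a) / (1 - conj a * z)`.
For such an `h`, both `h z₁ + h z₂` and `h z₁ * h z₂` are rational functions of
`s = z₁ + z₂` and `p = z₁ z₂` with denominator `(1 - ā z₁)(1 - ā z₂) = 1 - ā s + ā² p`, which
does not vanish on `G₂`; this gives a holomorphic `H_h`. The same construction for `h⁻¹`
yields its inverse.
-/

open Metric Set

lemma one_sub_conj_mul_ne_zero {a z : ℂ} (ha : ‖a‖ ≤ 1) (hz : ‖z‖ < 1) :
    1 - conj a * z ≠ 0 := by
  intro h
  have hnorm : ‖conj a * z‖ = 1 := by rw [← sub_eq_zero.1 h, norm_one]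
  rw [norm_mul, norm_conj] at hnorm
  nlinarith [norm_nonneg a, norm_nonneg z]

noncomputable def mobius (a z : ℂ) : ℂ := (z - a) / (1 - conj a * z)

@[simp]
lemma mobius_zero (a : ℂ) : mobius a 0 = -a := by simp [mobius]

lemma norm_mobius_lt_one {a z : ℂ} (ha : ‖a‖ < 1) (hz : ‖z‖ < 1) : ‖mobius a z‖ < 1 := by
  rw [mobius, norm_div, div_lt_one (norm_pos_iff.2 (one_sub_conj_mul_ne_zero ha.le hz))]
  have identity : normSq (1 - conj a * z) - normSq (z - a)
      = (1 - normSq a) * (1 - normSq z) := by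
    simp only [normSq_apply, sub_re, sub_im, mul_re, mul_im, conj_re, conj_im, one_re, one_im]
    ring
  have hsq : normSq (z - a) < normSq (1 - conj a * z) := by
    rw [normSq_eq_norm_sq a, normSq_eq_norm_sq z] at identity
    nlinarith [mul_pos (by nlinarith [norm_nonneg a] : (0 : ℝ) < 1 - ‖a‖ ^ 2)
      (by nlinarith [norm_nonneg z] : (0 : ℝ) < 1 - ‖z‖ ^ 2)]
  rw [normSq_eq_norm_sq, normSq_eq_norm_sq] at hsq
  exact (pow_lt_pow_iff_left₀ (norm_nonneg _) (norm_nonneg _) two_ne_zero).1 hsq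

lemma mobius_neg_mobius {a z : ℂ} (ha : ‖a‖ < 1) (hz : ‖z‖ < 1) :
    mobius (-a) (mobius a z) = z := by
  have hD := one_sub_conj_mul_ne_zero ha.le hz
  have hA := one_sub_conj_mul_ne_zero ha.le ha
  have num : (z - a) / (1 - conj a * z) + a = z * (1 - conj a * a) / (1 - conj a * z) := by
    rw [div_add' _ _ _ hD]
    ring
  have den : 1 + conj a * ((z - a) / (1 - conj a * z))
      = (1 - conj a * a) / (1 - conj a * z) := by
    rw [mul_div_assoc', add_div' _ _ _ hD]
    ring
  simp only [mobius, map_neg, sub_neg_eq_add, neg_mul, sub_neg_eq_add, num, den]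
  rw [div_div_div_cancel_right₀ hD, mul_div_cancel_right₀ _ hA]

lemma differentiableOn_mobius {a : ℂ} (ha : ‖a‖ ≤ 1) :
    DifferentiableOn ℂ (mobius a) (ball 0 1) := fun _ hz =>
  ((differentiableAt_id.sub_const a).div ((differentiableAt_id.const_mul _).const_sub 1)
    (one_sub_conj_mul_ne_zero ha (mem_ball_zero_iff.1 hz))).differentiableWithinAt

lemma mapsTo_mobius {a : ℂ} (ha : ‖a‖ < 1) : MapsTo (mobius a) (ball 0 1) (ball 0 1) :=
  fun _ hz => mem_ball_zero_iff.2 (norm_mobius_lt_one ha (mem_ball_zero_iff.1 hz))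

lemma exists_eq_mul_of_leftInvOn_ball {F G : ℂ → ℂ}
    (hF : DifferentiableOn ℂ F (ball 0 1)) (hG : DifferentiableOn ℂ G (ball 0 1))
    (hFmaps : MapsTo F (ball 0 1) (ball 0 1)) (hGmaps : MapsTo G (ball 0 1) (ball 0 1))
    (hGF : LeftInvOn G F (ball 0 1)) (hF0 : F 0 = 0) :
    ∃ ω : ℂ, EqOn F (fun z => ω * z) (ball 0 1) := by
  have hG0 : G 0 = 0 := by simpa [hF0] using hGF (mem_ball_self one_pos)
  have norm_eq : ∀ z ∈ ball (0 : ℂ) 1, ‖F z‖ = ‖z‖ := by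
    intro z hz
    have hFz := norm_le_norm_of_mapsTo_ball hF (hFmaps.mono_right ball_subset_closedBall) hF0
      (mem_ball_zero_iff.1 hz)
    have hGFz := norm_le_norm_of_mapsTo_ball hG (hGmaps.mono_right ball_subset_closedBall) hG0
      (mem_ball_zero_iff.1 (hFmaps hz))
    rw [hGF hz] at hGFz
    exact le_antisymm hFz hGFz
  have half_mem : (2⁻¹ : ℂ) ∈ ball (0 : ℂ) 1 := by
    rw [mem_ball_zero_iff, norm_inv, RCLike.norm_ofNat]
    norm_num
  have hslope : ‖dslope F 0 2⁻¹‖ = 1 / 1 := by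
    rw [dslope_of_ne _ (by norm_num), slope_def_field, hF0, sub_zero, sub_zero, norm_div,
      norm_eq _ half_mem, div_self (by norm_num), div_one]
  refine ⟨dslope F 0 2⁻¹, fun z hz => ?_⟩
  simpa [hF0, mul_comm] using affine_of_mapsTo_ball_of_norm_dslope_eq_div hF
    (by rw [hF0]; exact hFmaps.mono_right ball_subset_closedBall) half_mem hslope hz

theorem exists_eq_mul_mobius_of_invOn {h g : ℂ → ℂ}
    (hd : DifferentiableOn ℂ h (ball 0 1)) (hgd : DifferentiableOn ℂ g (ball 0 1))
    (hmaps : MapsTo h (ball 0 1) (ball 0 1)) (hgmaps : MapsTo g (ball 0 1) (ball 0 1))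
    (hgh : LeftInvOn g h (ball 0 1)) (hhg : RightInvOn g h (ball 0 1)) :
    ∃ ω a : ℂ, ‖a‖ < 1 ∧ EqOn h (fun z => ω * mobius a z) (ball 0 1) := by
  set a := g 0
  have ha : ‖a‖ < 1 := mem_ball_zero_iff.1 (hgmaps (mem_ball_self one_pos))
  have ha' : ‖-a‖ < 1 := by rwa [norm_neg]
  obtain ⟨ω, hω⟩ := exists_eq_mul_of_leftInvOn_ball (F := h ∘ mobius (-a)) (G := mobius a ∘ g)
    (hd.comp (differentiableOn_mobius ha'.le) (mapsTo_mobius ha'))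
    ((differentiableOn_mobius ha.le).comp hgd hgmaps)
    (hmaps.comp (mapsTo_mobius ha')) ((mapsTo_mobius ha).comp hgmaps)
    (fun z hz => by
      simpa [hgh (mapsTo_mobius ha' hz)] using mobius_neg_mobius ha' (mem_ball_zero_iff.1 hz))
    (by simpa using hhg (mem_ball_self one_pos))
  refine ⟨ω, a, ha, fun z hz => ?_⟩
  simpa [mobius_neg_mobius ha (mem_ball_zero_iff.1 hz)] using hω (mapsTo_mobius ha hz)

def IsSymmetrization (H : ℂ × ℂ → ℂ × ℂ) (h : ℂ → ℂ) : Prop :=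
  ∀ z₁ z₂ : ℂ, ‖z₁‖ < 1 → ‖z₂‖ < 1 → H (z₁ + z₂, z₁ * z₂) = (h z₁ + h z₂, h z₁ * h z₂)

namespace IsSymmetrization

variable {H K : ℂ × ℂ → ℂ × ℂ} {h g : ℂ → ℂ}

lemma congr (hH : IsSymmetrization H h) (heq : EqOn h g (ball 0 1)) :
    IsSymmetrization H g := fun z₁ z₂ h₁ h₂ => by
  rw [hH z₁ z₂ h₁ h₂, heq (mem_ball_zero_iff.2 h₁), heq (mem_ball_zero_iff.2 h₂)]

lemma mapsTo (hH : IsSymmetrization H h) (hmaps : MapsTo h (ball 0 1) (ball 0 1)) :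
    MapsTo H G2 G2 := by
  rintro _ ⟨z₁, z₂, h₁, h₂, rfl⟩
  rw [hH z₁ z₂ h₁ h₂]
  exact ⟨h z₁, h z₂, mem_ball_zero_iff.1 (hmaps (mem_ball_zero_iff.2 h₁)),
    mem_ball_zero_iff.1 (hmaps (mem_ball_zero_iff.2 h₂)), rfl⟩

lemma leftInvOn (hH : IsSymmetrization H h) (hK : IsSymmetrization K g)
    (hmaps : MapsTo h (ball 0 1) (ball 0 1)) (hgh : LeftInvOn g h (ball 0 1)) :
    LeftInvOn K H G2 := by
  rintro _ ⟨z₁, z₂, h₁, h₂, rfl⟩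
  rw [hH z₁ z₂ h₁ h₂, hK _ _ (mem_ball_zero_iff.1 (hmaps (mem_ball_zero_iff.2 h₁)))
    (mem_ball_zero_iff.1 (hmaps (mem_ball_zero_iff.2 h₂))),
    hgh (mem_ball_zero_iff.2 h₁), hgh (mem_ball_zero_iff.2 h₂)]

end IsSymmetrization

def symMobiusDen (a : ℂ) (w : ℂ × ℂ) : ℂ := 1 - conj a * w.1 + conj a ^ 2 * w.2

noncomputable def symMobius (ω a : ℂ) (w : ℂ × ℂ) : ℂ × ℂ :=
  (ω * (((1 + a * conj a) * w.1 - 2 * a - 2 * conj a * w.2) / symMobiusDen a w),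
    ω ^ 2 * ((w.2 - a * w.1 + a ^ 2) / symMobiusDen a w))

lemma symMobiusDen_add_mul (a z₁ z₂ : ℂ) :
    symMobiusDen a (z₁ + z₂, z₁ * z₂) = (1 - conj a * z₁) * (1 - conj a * z₂) := by
  rw [symMobiusDen]
  ring

lemma isSymmetrization_symMobius {a : ℂ} (ha : ‖a‖ ≤ 1) (ω : ℂ) :
    IsSymmetrization (symMobius ω a) (fun z => ω * mobius a z) := by
  intro z₁ z₂ h₁ h₂
  have hD₁ := one_sub_conj_mul_ne_zero ha h₁
  have hD₂ := one_sub_conj_mul_ne_zero ha h₂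
  simp only [symMobius, symMobiusDen_add_mul, mobius, Prod.mk.injEq]
  constructor <;> field_simp <;> ring

lemma differentiableOn_symMobius {a : ℂ} (ha : ‖a‖ ≤ 1) (ω : ℂ) :
    DifferentiableOn ℂ (symMobius ω a) G2 := by
  rintro _ ⟨z₁, z₂, h₁, h₂, rfl⟩
  have hD : symMobiusDen a (z₁ + z₂, z₁ * z₂) ≠ 0 := by
    rw [symMobiusDen_add_mul]
    exact mul_ne_zero (one_sub_conj_mul_ne_zero ha h₁) (one_sub_conj_mul_ne_zero ha h₂)
  refine DifferentiableAt.differentiableWithinAt ?_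
  unfold symMobius symMobiusDen at hD ⊢
  fun_prop (disch := exact hD)

lemma exists_symmetrization_of_invOn {h g : ℂ → ℂ}
    (hd : DifferentiableOn ℂ h (ball 0 1)) (hgd : DifferentiableOn ℂ g (ball 0 1))
    (hmaps : MapsTo h (ball 0 1) (ball 0 1)) (hgmaps : MapsTo g (ball 0 1) (ball 0 1))
    (hgh : LeftInvOn g h (ball 0 1)) (hhg : RightInvOn g h (ball 0 1)) :
    ∃ H, IsSymmetrization H h ∧ DifferentiableOn ℂ H G2 := by
  obtain ⟨ω, a, ha, hrep⟩ := exists_eq_mul_mobius_of_invOn hd hgd hmaps hgmaps hgh hhg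
  exact ⟨symMobius ω a, (isSymmetrization_symMobius ha.le ω).congr hrep.symm,
    differentiableOn_symMobius ha.le ω⟩

/-- If `h` is an automorphism of the unit disc (with holomorphic inverse `g`), then the
symmetrization `H_h` is a well-defined biholomorphic self-map of the symmetrized bidisc. -/
theorem stmt_5 (h g : ℂ → ℂ)
    (hd : DifferentiableOn ℂ h (Metric.ball (0 : ℂ) 1))
    (hgd : DifferentiableOn ℂ g (Metric.ball (0 : ℂ) 1))
    (hmaps : Set.MapsTo h (Metric.ball (0 : ℂ) 1) (Metric.ball (0 : ℂ) 1))
    (hgmaps : Set.MapsTo g (Metric.ball (0 : ℂ) 1) (Metric.ball (0 : ℂ) 1))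
    (hgh : ∀ z ∈ Metric.ball (0 : ℂ) 1, g (h z) = z)
    (hhg : ∀ z ∈ Metric.ball (0 : ℂ) 1, h (g z) = z) :
    ∃ H : ℂ × ℂ → ℂ × ℂ,
      (∀ z₁ z₂ : ℂ, ‖z₁‖ < 1 → ‖z₂‖ < 1 →
          H (z₁ + z₂, z₁ * z₂) = (h z₁ + h z₂, h z₁ * h z₂)) ∧
      DifferentiableOn ℂ H G2 ∧ Set.BijOn H G2 G2 ∧
      ∃ K : ℂ × ℂ → ℂ × ℂ, DifferentiableOn ℂ K G2 ∧
        (∀ w ∈ G2, K (H w) = w) ∧ (∀ w ∈ G2, H (K w) = w) := by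
  obtain ⟨H, hH, hHd⟩ := exists_symmetrization_of_invOn hd hgd hmaps hgmaps hgh hhg
  obtain ⟨K, hK, hKd⟩ := exists_symmetrization_of_invOn hgd hd hgmaps hmaps hhg hgh
  have hKH : LeftInvOn K H G2 := hH.leftInvOn hK hmaps hgh
  have hHK : LeftInvOn H K G2 := hK.leftInvOn hH hgmaps hhg
  exact ⟨H, hH, hHd, InvOn.bijOn ⟨hKH, hHK⟩ (hH.mapsTo hmaps) (hK.mapsTo hgmaps),
    K, hKd, hKH, hHK⟩
end

section
/- Let α ∈ ℂ with |α| < 1 and let H(s,p) = (((1+|α|²)s - 2ᾱp - 2α)/(1 - ᾱs + ᾱ²p), (p - αs + α²)/(1 - ᾱs + ᾱ²p)). Then the complex Jacobian matrix of H at the point (2α, α²) equals (1-|α|²)⁻² times the matrix with rows (1+|α|², -2ᾱ) and (-α, 1). -/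
/-! At `(2α, α²)` both numerators of `H` vanish, so to first order `H` is the linear part of
its numerators divided by the common denominator, which there equals `(1 - ᾱα)² = (1 - |α|²)²`. -/

open Complex ComplexConjugate ContinuousLinearMap

theorem HasFDerivAt.div_of_apply_eq_zero {𝕜 E : Type*} [NontriviallyNormedField 𝕜]
    [NormedAddCommGroup E] [NormedSpace 𝕜 E] {f g : E → 𝕜} {f' : E →L[𝕜] 𝕜} {a : E}
    (hf : HasFDerivAt f f' a) (hg : DifferentiableAt 𝕜 g a) (hfa : f a = 0) (hga : g a ≠ 0) :
    HasFDerivAt (fun x => f x / g x) ((g a)⁻¹ • f') a := by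
  have h := (hg.fun_inv hga).hasFDerivAt.fun_smul hf
  rw [hfa, ContinuousLinearMap.smulRight_zero, add_zero] at h
  simpa only [smul_eq_mul, div_eq_inv_mul] using h

theorem stmt_7 (α : ℂ) (hα : ‖α‖ < 1) :
    (fderiv ℂ (fun w : ℂ × ℂ =>
        ((((1 + (‖α‖ : ℂ) ^ 2) * w.1 - 2 * conj α * w.2 - 2 * α) /
            (1 - conj α * w.1 + (conj α) ^ 2 * w.2),
          (w.2 - α * w.1 + α ^ 2) / (1 - conj α * w.1 + (conj α) ^ 2 * w.2)) : ℂ × ℂ))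
        (2 * α, α ^ 2)) (1, 0) =
      ((1 - (‖α‖ : ℂ) ^ 2) ^ 2)⁻¹ • ((1 + (‖α‖ : ℂ) ^ 2, -α) : ℂ × ℂ) ∧
    (fderiv ℂ (fun w : ℂ × ℂ =>
        ((((1 + (‖α‖ : ℂ) ^ 2) * w.1 - 2 * conj α * w.2 - 2 * α) /
            (1 - conj α * w.1 + (conj α) ^ 2 * w.2),
          (w.2 - α * w.1 + α ^ 2) / (1 - conj α * w.1 + (conj α) ^ 2 * w.2)) : ℂ × ℂ))
        (2 * α, α ^ 2)) (0, 1) =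
      ((1 - (‖α‖ : ℂ) ^ 2) ^ 2)⁻¹ • ((-2 * conj α, 1) : ℂ × ℂ) := by
  have hc1 : 1 - (‖α‖ : ℂ) ^ 2 ≠ 0 := by
    have : ‖α‖ ^ 2 < 1 := by nlinarith [norm_nonneg α]
    exact_mod_cast (sub_pos.mpr this).ne'
  set c : ℂ := (‖α‖ : ℂ) ^ 2
  have hc : conj α * α = c := conj_mul' α
  have hden : 1 - conj α * (2 * α) + conj α ^ 2 * α ^ 2 = (1 - c) ^ 2 := by
    rw [← hc]; ring
  have hD : DifferentiableAt ℂ (fun w : ℂ × ℂ => 1 - conj α * w.1 + conj α ^ 2 * w.2)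
      (2 * α, α ^ 2) := by fun_prop
  have hN₁ : HasFDerivAt (fun w : ℂ × ℂ => (1 + c) * w.1 - 2 * conj α * w.2 - 2 * α)
      ((1 + c) • fst ℂ ℂ ℂ - (2 * conj α) • snd ℂ ℂ ℂ) (2 * α, α ^ 2) :=
    ((hasFDerivAt_fst.const_mul _).sub (hasFDerivAt_snd.const_mul _)).sub_const _
  have hN₂ : HasFDerivAt (fun w : ℂ × ℂ => w.2 - α * w.1 + α ^ 2)
      (snd ℂ ℂ ℂ - α • fst ℂ ℂ ℂ) (2 * α, α ^ 2) :=
    (hasFDerivAt_snd.sub (hasFDerivAt_fst.const_mul α)).add_const _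
  have hD₀ : 1 - conj α * (2 * α) + conj α ^ 2 * α ^ 2 ≠ 0 := hden ▸ pow_ne_zero 2 hc1
  have hH := (hN₁.div_of_apply_eq_zero hD (by rw [← hc]; ring) hD₀).prodMk
    (hN₂.div_of_apply_eq_zero hD (by ring) hD₀)
  rw [hH.fderiv, hden]
  constructor <;> ext <;> simp
end

section
/- For s ∈ ℂ with |s| < 1, the supremum over ω on the unit circle of |s + (1-|s|²)/(sω² - 2ω + s̄)| equals (|s|+1)/2. -/
open Complex ComplexConjugate

/-!
On the unit circle `s ω² - 2 ω + conj s = ω (2 Re (s ω) - 2)`, so with `t = s ω` the expression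
has modulus `‖t - c‖` for the real number `c = (1 - ‖s‖²) / (2 (1 - Re t))`. Because `‖t‖ = ‖s‖`,
this `c` is equidistant from `t` and `1`, so the modulus is `1 - c`. It decreases in
`Re t ∈ [-‖s‖, ‖s‖]` and reaches `(‖s‖ + 1) / 2` at `Re t = -‖s‖`.
-/

lemma norm_sub_ofReal_eq_abs_one_sub {t : ℂ} {c : ℝ} (hc : 2 * c * (1 - t.re) = 1 - ‖t‖ ^ 2) :
    ‖t - c‖ = |1 - c| := by
  rw [← sq_eq_sq₀ (norm_nonneg _) (abs_nonneg _), sq_abs, Complex.sq_norm, normSq_apply]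
  rw [Complex.sq_norm, normSq_apply] at hc
  simp only [sub_re, sub_im, ofReal_re, ofReal_im, sub_zero]
  linear_combination hc

lemma mul_sq_sub_two_mul_add_conj {s ω : ℂ} (hω : ‖ω‖ = 1) :
    s * ω ^ 2 - 2 * ω + conj s = ω * (2 * (s * ω).re - 2) := by
  have hωω : ω * conj ω = 1 := by
    rw [mul_conj, normSq_eq_norm_sq, hω]; norm_num
  have hre : (2 * (s * ω).re : ℂ) = s * ω + conj s * conj ω := by
    rw [← map_mul, add_conj]; push_cast; ring
  rw [hre]
  linear_combination (-conj s) * hωω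

lemma norm_add_div_mul_sq_sub_two_mul_add_conj {s ω : ℂ} (hs : ‖s‖ < 1) (hω : ‖ω‖ = 1) :
    ‖s + (1 - (‖s‖ : ℂ) ^ 2) / (s * ω ^ 2 - 2 * ω + conj s)‖
      = 1 - (1 - ‖s‖ ^ 2) / (2 * (1 - (s * ω).re)) := by
  rw [mul_sq_sub_two_mul_add_conj hω]
  set t := s * ω with ht_def
  set c : ℝ := (1 - ‖s‖ ^ 2) / (2 * (1 - t.re))
  have ht : ‖t‖ = ‖s‖ := by simp [t, hω]
  have hre : t.re ≤ ‖s‖ := ht ▸ re_le_norm t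
  have hpos : 0 < 2 * (1 - t.re) := by linarith
  have hc : 2 * c * (1 - t.re) = 1 - ‖t‖ ^ 2 := by
    rw [ht, mul_comm 2 c, mul_assoc]; exact div_mul_cancel₀ _ hpos.ne'
  have hc1 : c ≤ 1 := by
    rw [div_le_one hpos]; nlinarith [norm_nonneg s]
  have hmul : ω * (s + (1 - (‖s‖ : ℂ) ^ 2) / (ω * (2 * t.re - 2))) = t - c := by
    have hω0 : ω ≠ 0 := by rintro rfl; simp at hω
    rw [mul_add, mul_comm ω s, ← ht_def, ← mul_div_assoc, mul_div_mul_left _ _ hω0,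
      sub_eq_add_neg]
    rw [show (2 * t.re - 2 : ℂ) = -(2 * (1 - t.re)) by ring, div_neg]
    simp only [c]; push_cast; rfl
  have hnorm := congrArg norm hmul
  rw [norm_mul, hω, one_mul] at hnorm
  rw [hnorm, norm_sub_ofReal_eq_abs_one_sub hc, abs_of_nonneg (sub_nonneg.mpr hc1)]

lemma one_sub_div_le_of_neg_le {r x : ℝ} (hr : r < 1) (hx : -r ≤ x) (hx1 : x < 1) :
    1 - (1 - r ^ 2) / (2 * (1 - x)) ≤ (r + 1) / 2 := by
  have : (1 - r) / 2 ≤ (1 - r ^ 2) / (2 * (1 - x)) := by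
    rw [div_le_div_iff₀ two_pos (by linarith)]
    nlinarith
  linarith

lemma one_sub_div_of_neg {r : ℝ} (hr : 0 ≤ r) :
    1 - (1 - r ^ 2) / (2 * (1 - -r)) = (r + 1) / 2 := by
  have : 1 + r ≠ 0 := by positivity
  rw [sub_neg_eq_add]
  field_simp
  ring

lemma exists_norm_eq_one_re_mul_eq_neg_norm (s : ℂ) : ∃ ω : ℂ, ‖ω‖ = 1 ∧ (s * ω).re = -‖s‖ := by
  refine ⟨-exp (↑(-s.arg) * I), by rw [norm_neg, norm_exp_ofReal_mul_I], ?_⟩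
  conv_lhs => rw [← norm_mul_exp_arg_mul_I s]
  rw [mul_neg, mul_assoc, ← exp_add]
  push_cast
  simp

theorem stmt_8 (s : ℂ) (hs : ‖s‖ < 1) :
    sSup ((fun ω : ℂ =>
        ‖(s + (1 - (‖s‖ : ℂ) ^ 2) / (s * ω ^ 2 - 2 * ω + conj s))‖)
      '' {ω : ℂ | ‖ω‖ = 1}) = (‖s‖ + 1) / 2 := by
  refine IsGreatest.csSup_eq ⟨?_, ?_⟩
  · obtain ⟨ω, hω, hre⟩ := exists_norm_eq_one_re_mul_eq_neg_norm s
    refine ⟨ω, hω, ?_⟩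
    simp only [norm_add_div_mul_sq_sub_two_mul_add_conj hs hω, hre,
      one_sub_div_of_neg (norm_nonneg s)]
  · rintro _ ⟨ω, hω : ‖ω‖ = 1, rfl⟩
    have hre := abs_re_le_norm (s * ω)
    rw [norm_mul, hω, mul_one, abs_le] at hre
    dsimp only
    rw [norm_add_div_mul_sq_sub_two_mul_add_conj hs hω]
    exact one_sub_div_le_of_neg_le hs hre.1 (hre.2.trans_lt hs)
end

section
/- For s ∈ ℂ with |s| < 1 and β ∈ ℂ, the supremum over ω on the unit circle of |(s²ω² - 2ωs + 1)·β| / |sω² - 2ω + s̄| equals |β|·(|s|+1)/2. -/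
/-!
Write `t = Re (s ω)`. On the unit circle `conj ω = ω⁻¹`, so the numerator is `(s ω - 1)² β` and the
denominator is `ω (s ω + conj (s ω) - 2)`; the quotient becomes
`‖β‖ (‖s‖² - 2t + 1) / (2 (1 - t)) = ‖β‖ (1 - (1 - ‖s‖²) / (2 (1 - t)))`, which is decreasing in `t`.
As `ω` runs over the circle, `t` runs over `[-‖s‖, ‖s‖]`, so the supremum is attained at `t = -‖s‖`.
-/

open Complex ComplexConjugate

lemma Complex.sq_norm_sub_one (z : ℂ) : ‖z - 1‖ ^ 2 = ‖z‖ ^ 2 - 2 * z.re + 1 := by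
  rw [Complex.sq_norm, Complex.sq_norm, normSq_sub]
  simp
  ring

lemma Complex.exists_norm_eq_one_mul_eq_neg_norm (s : ℂ) : ∃ ω : ℂ, ‖ω‖ = 1 ∧ s * ω = -‖s‖ := by
  refine ⟨-exp (-(arg s : ℂ) * I), by simpa using norm_exp_ofReal_mul_I (-arg s), ?_⟩
  conv_lhs => rw [← norm_mul_exp_arg_mul_I s]
  rw [mul_neg, mul_assoc, ← exp_add]
  simp

/-- The quotient on the unit circle as a function of `r = ‖s‖` and `t = Re (s ω)`. -/
noncomputable def quotientProfile (r t : ℝ) : ℝ := (r ^ 2 - 2 * t + 1) / (2 * |1 - t|)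

lemma norm_quotient_eq_on_unit_circle (s β : ℂ) {ω : ℂ} (hω : ‖ω‖ = 1) :
    ‖(s ^ 2 * ω ^ 2 - 2 * ω * s + 1) * β‖ / ‖s * ω ^ 2 - 2 * ω + conj s‖ =
      ‖β‖ * quotientProfile ‖s‖ (s * ω).re := by
  have hω_conj : ω * conj ω = 1 := by
    rw [mul_conj, normSq_eq_norm_sq, hω]
    norm_num
  have hnorm : ‖s * ω‖ = ‖s‖ := by rw [norm_mul, hω, mul_one]
  have hnum : s ^ 2 * ω ^ 2 - 2 * ω * s + 1 = (s * ω - 1) ^ 2 := by ring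
  have hden : s * ω ^ 2 - 2 * ω + conj s = ω * ((-2 * (1 - (s * ω).re) : ℝ) : ℂ) := by
    have h := add_conj (s * ω)
    rw [map_mul] at h
    push_cast at h ⊢
    linear_combination ω * h - conj s * hω_conj
  rw [hnum, hden, norm_mul, norm_mul, norm_pow, sq_norm_sub_one, hnorm, hω, norm_real,
    Real.norm_eq_abs, abs_mul, abs_neg, abs_two, quotientProfile]
  ring

lemma quotientProfile_le {r t : ℝ} (hr : r < 1) (ht : |t| ≤ r) :
    quotientProfile r t ≤ (r + 1) / 2 := by
  obtain ⟨hlo, hhi⟩ := abs_le.mp ht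
  rw [quotientProfile, abs_of_pos (by linarith : 0 < 1 - t), div_le_div_iff₀ (by linarith) two_pos]
  -- the difference of the two sides is `2 (1 - r) (r + t) ≥ 0`
  nlinarith [mul_nonneg (sub_nonneg.mpr hr.le) (neg_le_iff_add_nonneg.mp hlo)]

lemma quotientProfile_neg_self {r : ℝ} (hr : 0 ≤ r) : quotientProfile r (-r) = (r + 1) / 2 := by
  rw [quotientProfile, sub_neg_eq_add, abs_of_pos (by linarith)]
  field_simp
  ring

theorem stmt_11 (s β : ℂ) (hs : ‖s‖ < 1) :
    sSup ((fun ω : ℂ =>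
        ‖(s ^ 2 * ω ^ 2 - 2 * ω * s + 1) * β‖ /
          ‖s * ω ^ 2 - 2 * ω + conj s‖)
      '' {ω : ℂ | ‖ω‖ = 1}) = ‖β‖ * (‖s‖ + 1) / 2 := by
  rw [mul_div_assoc]
  apply IsGreatest.csSup_eq
  constructor
  · obtain ⟨ω, hω, hsω⟩ := exists_norm_eq_one_mul_eq_neg_norm s
    refine ⟨ω, hω, (norm_quotient_eq_on_unit_circle s β hω).trans ?_⟩
    rw [hsω, neg_re, ofReal_re, quotientProfile_neg_self (norm_nonneg s)]
  · rintro _ ⟨ω, hω : ‖ω‖ = 1, rfl⟩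
    refine (norm_quotient_eq_on_unit_circle s β hω).trans_le ?_
    have hre : |(s * ω).re| ≤ ‖s‖ := by
      simpa only [norm_mul, hω, mul_one] using abs_re_le_norm (s * ω)
    exact mul_le_mul_of_nonneg_left (quotientProfile_le hs hre) (norm_nonneg β)
end

section
/- Let θ ∈ [0, 2π) and z₀ = (e^{iθ}, 0). The boundary of the symmetrized bidisc G₂, defined by h(s,p) = 2|s - s̄p| + |s² - 4p| + |s|² - 4 = 0, is C¹ near z₀, and the partial derivatives satisfy ∂h/∂s(z₀) = 3e^{-iθ} and ∂h/∂p(z₀) = -3e^{-2iθ}. -/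
open Complex ComplexConjugate

/-!
At `(s, 0)` with `s ≠ 0` the arguments `s - s̄p` and `s² - 4p` of the two moduli in `h` equal
`s` and `s²`, which are nonzero, so `h` is smooth there. For `|s| = 1` its real differential at
`(s, 0)` is `(u, v) ↦ Re (6 s̄ u - 6 s̄² v)`, and a functional `u ↦ Re (a u)` has Wirtinger
derivative `a / 2`.
-/

theorem HasFDerivAt.norm {E F : Type*} [NormedAddCommGroup E] [NormedSpace ℝ E]
    [NormedAddCommGroup F] [InnerProductSpace ℝ F] {f : E → F} {f' : E →L[ℝ] F} {x : E}
    (hf : HasFDerivAt f f' x) (h0 : f x ≠ 0) :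
    HasFDerivAt (fun y => ‖f y‖) (‖f x‖⁻¹ • (innerSL ℝ (f x)).comp f') x := by
  have hx : ‖f x‖ ≠ 0 := norm_ne_zero_iff.2 h0
  have hsqrt : HasDerivAt Real.sqrt (1 / (2 * ‖f x‖)) (‖f x‖ ^ 2) := by
    simpa [Real.sqrt_sq (norm_nonneg _)] using Real.hasDerivAt_sqrt (pow_ne_zero 2 hx)
  have h := hsqrt.comp_hasFDerivAt x hf.norm_sq
  rw [show Real.sqrt ∘ (fun y => ‖f y‖ ^ 2) = fun y => ‖f y‖ from
    funext fun y => Real.sqrt_sq (norm_nonneg _)] at h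
  refine h.congr_fderiv ?_
  ext v
  simp only [one_div, mul_inv_rev, smul_apply, ContinuousLinearMap.comp_apply, coe_innerSL_apply,
    nsmul_eq_mul, Nat.cast_ofNat, smul_eq_mul]
  field_simp

lemma half_mul_re_sub_I_mul_re_mul_I (a : ℂ) :
    (1 / 2 : ℂ) * ((a.re : ℂ) - I * ((a * I).re : ℂ)) = a / 2 := by
  apply Complex.ext <;> simp <;> ring

namespace SymmetrizedBidisc

noncomputable def definingFun (w : ℂ × ℂ) : ℝ :=
  2 * ‖w.1 - conj w.1 * w.2‖ + ‖w.1 ^ 2 - 4 * w.2‖ + ‖w.1‖ ^ 2 - 4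

theorem contDiffAt_definingFun {n : WithTop ℕ∞} {s : ℂ} (hs : s ≠ 0) :
    ContDiffAt ℝ n definingFun (s, 0) := by
  have hf : ContDiffAt ℝ n (fun w : ℂ × ℂ => w.1 - conj w.1 * w.2) (s, 0) :=
    contDiffAt_fst.sub ((conjCLE.contDiff.contDiffAt.comp _ contDiffAt_fst).mul contDiffAt_snd)
  have hg : ContDiffAt ℝ n (fun w : ℂ × ℂ => w.1 ^ 2 - 4 * w.2) (s, 0) :=
    (contDiffAt_fst.pow 2).sub (contDiffAt_const.mul contDiffAt_snd)
  exact (((contDiffAt_const.mul (hf.norm ℝ (by simpa using hs))).add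
    (hg.norm ℝ (by simpa using hs))).add (contDiffAt_fst.norm_sq ℝ)).sub contDiffAt_const

theorem hasFDerivAt_definingFun {s : ℂ} (hs : ‖s‖ = 1) :
    HasFDerivAt definingFun
      (reCLM.comp ((6 * conj s) • ContinuousLinearMap.fst ℝ ℂ ℂ
        - (6 * conj s ^ 2) • ContinuousLinearMap.snd ℝ ℂ ℂ)) (s, 0) := by
  have hs0 : s ≠ 0 := norm_ne_zero_iff.1 (by simp [hs])
  have hf : HasFDerivAt (fun w : ℂ × ℂ => ‖w.1 - conj w.1 * w.2‖) _ (s, 0) :=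
    (hasFDerivAt_fst.sub
      (((conjCLE : ℂ →L[ℝ] ℂ).hasFDerivAt.comp _ hasFDerivAt_fst).mul hasFDerivAt_snd)).norm
      (by simpa using hs0)
  have hg : HasFDerivAt (fun w : ℂ × ℂ => ‖w.1 ^ 2 - 4 * w.2‖) _ (s, 0) :=
    ((hasFDerivAt_fst.pow 2).sub (hasFDerivAt_snd.const_mul (4 : ℂ))).norm (by simpa using hs0)
  refine ((((hf.const_mul 2).add hg).add hasFDerivAt_fst.norm_sq).sub_const 4).congr_fderiv ?_
  refine ContinuousLinearMap.ext fun ⟨u, v⟩ => ?_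
  simp only [ContinuousLinearEquiv.coe_coe, ContinuousAlgEquiv.coe_coeCLE, Pi.sub_apply,
    Pi.mul_apply, Function.comp_apply, conjCAE_apply, mul_zero, sub_zero, hs, inv_one, one_smul,
    norm_pow, one_pow, Nat.add_one_sub_one, pow_one, nsmul_eq_mul, Nat.cast_ofNat, add_apply,
    smul_apply, sub_apply, ContinuousLinearMap.comp_apply, ContinuousLinearMap.coe_fst',
    ContinuousLinearMap.coe_snd', innerSL_apply_apply, Complex.inner, smul_eq_mul, zero_mul,
    add_zero, reCLM_apply]
  have hcs : s * conj s = 1 := by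
    rw [mul_conj, normSq_eq_norm_sq, hs]; norm_num
  have key : 2 * ((u - conj s * v) * conj s) + (2 * s * u - 4 * v) * conj (s ^ 2)
      + 2 * (u * conj s) = 6 * conj s * u - 6 * conj s ^ 2 * v := by
    rw [map_pow]; linear_combination (2 * conj s * u) * hcs
  rw [← key]
  simp only [add_re, mul_re, re_ofNat, im_ofNat]
  ring

end SymmetrizedBidisc

theorem stmt_13_general (θ : ℝ)
    (h : ℂ × ℂ → ℝ)
    (hh : ∀ w : ℂ × ℂ,
      h w = 2 * ‖w.1 - conj w.1 * w.2‖ + ‖w.1 ^ 2 - 4 * w.2‖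
        + ‖w.1‖ ^ 2 - 4)
    (z₀ : ℂ × ℂ) (hz₀ : z₀ = (Complex.exp (θ * Complex.I), 0)) :
    ContDiffAt ℝ 1 h z₀ ∧
    (1 / 2 : ℂ) *
        (((fderiv ℝ h z₀ ((1 : ℂ), (0 : ℂ)) : ℝ) : ℂ)
          - Complex.I * ((fderiv ℝ h z₀ (Complex.I, (0 : ℂ)) : ℝ) : ℂ)) =
      3 * Complex.exp (-θ * Complex.I) ∧
    (1 / 2 : ℂ) *
        (((fderiv ℝ h z₀ ((0 : ℂ), (1 : ℂ)) : ℝ) : ℂ)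
          - Complex.I * ((fderiv ℝ h z₀ ((0 : ℂ), Complex.I) : ℝ) : ℂ)) =
      -3 * Complex.exp (-2 * θ * Complex.I) := by
  obtain rfl : h = SymmetrizedBidisc.definingFun := funext hh
  subst hz₀
  have hD := (SymmetrizedBidisc.hasFDerivAt_definingFun (norm_exp_ofReal_mul_I θ)).fderiv
  have hconj : conj (exp (θ * I)) = exp (-θ * I) := by rw [← exp_conj]; simp
  have hconj_sq : conj (exp (θ * I)) ^ 2 = exp (-2 * θ * I) := by
    rw [hconj, ← exp_nat_mul]; push_cast; ring_nf
  refine ⟨SymmetrizedBidisc.contDiffAt_definingFun (exp_ne_zero _), ?_, ?_⟩ <;>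
    simp only [hD, ContinuousLinearMap.comp_apply, sub_apply, smul_apply,
      ContinuousLinearMap.coe_fst', ContinuousLinearMap.coe_snd', reCLM_apply, smul_eq_mul,
      mul_one, mul_zero, sub_zero, zero_sub, neg_mul_eq_neg_mul]
  · rw [half_mul_re_sub_I_mul_re_mul_I, hconj]; ring
  · rw [half_mul_re_sub_I_mul_re_mul_I, hconj_sq]; ring

/-- The defining function of the symmetrized bidisc is `C¹` near the boundary point
`z₀ = (e^{iθ}, 0)`, and its Wirtinger derivatives there are `3e^{-iθ}` and `-3e^{-2iθ}`. -/
theorem stmt_13 (θ : ℝ) (hθ : θ ∈ Set.Ico 0 (2 * Real.pi))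
    (h : ℂ × ℂ → ℝ)
    (hh : ∀ w : ℂ × ℂ,
      h w = 2 * ‖w.1 - conj w.1 * w.2‖ + ‖w.1 ^ 2 - 4 * w.2‖
        + ‖w.1‖ ^ 2 - 4)
    (z₀ : ℂ × ℂ) (hz₀ : z₀ = (Complex.exp (θ * Complex.I), 0)) :
    ContDiffAt ℝ 1 h z₀ ∧
    (1 / 2 : ℂ) *
        (((fderiv ℝ h z₀ ((1 : ℂ), (0 : ℂ)) : ℝ) : ℂ)
          - Complex.I * ((fderiv ℝ h z₀ (Complex.I, (0 : ℂ)) : ℝ) : ℂ)) =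
      3 * Complex.exp (-θ * Complex.I) ∧
    (1 / 2 : ℂ) *
        (((fderiv ℝ h z₀ ((0 : ℂ), (1 : ℂ)) : ℝ) : ℂ)
          - Complex.I * ((fderiv ℝ h z₀ ((0 : ℂ), Complex.I) : ℝ) : ℂ)) =
      -3 * Complex.exp (-2 * θ * Complex.I) :=
  stmt_13_general θ h hh z₀ hz₀
end

section
/- Let f = (f₁,f₂) : G₂ → G₂ be holomorphic with f(0,0) = (0,0), and let z₀ = (2α, α²) with |α| = 1. If f extends holomorphically to a neighborhood of z₀ and f(z₀) = z₀, then λ := ∂f₁/∂s(z₀) + α·∂f₁/∂p(z₀) equals ᾱ·∂f₂/∂s(z₀) + ∂f₂/∂p(z₀), is real, and λ ≥ 1; moreover (1, α)' is an eigenvector of the Jacobian J_f(z₀) with eigenvalue λ. -/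
/-!
For `‖ω‖ = 1`, Agler and Young's function `Φ_ω(s, p) = (2ωp - s) / (2 - ωs)` maps `G₂` into the
unit disc. Restricting `f` to the royal disc `z ↦ (2αz, α²z²)` and composing with `-ᾱ Φ_ω`
gives a self-map `g` of the disc with `g 0 = 0` and `g 1 = 1`, holomorphic near `1`, so by the
boundary Schwarz lemma `g' 1` is real and at least `1`. Write `J_f(z₀)(1, α) = (P, αQ)`. As `ω`
runs over the circle, `g' 1` runs over the line `Q + is(P - Q)`, `s ∈ ℝ`; a line of reals
bounded below is a single point, so `P = Q = λ ≥ 1`.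
-/

open Complex ComplexConjugate

open Metric Set Filter Topology

namespace Complex

theorem conj_mul_self_of_norm_eq_one {α : ℂ} (hα : ‖α‖ = 1) : conj α * α = 1 := by
  rw [conj_mul', hα]; norm_num

theorem normSq_two_sub_sub_sub_normSq (a b : ℂ) :
    normSq (2 - a - b) - normSq (2 * a * b - a - b) =
      2 * (1 - normSq a) * normSq (1 - b) + 2 * (1 - normSq b) * normSq (1 - a) := by
  simp only [normSq_apply, sub_re, sub_im, mul_re, mul_im, re_ofNat, im_ofNat, one_re, one_im]
  ring

theorem norm_two_mul_mul_sub_sub_lt {a b : ℂ} (ha : ‖a‖ < 1) (hb : ‖b‖ < 1) :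
    ‖2 * a * b - a - b‖ < ‖2 - a - b‖ := by
  have hna : normSq a < 1 := by rw [normSq_eq_norm_sq]; nlinarith [norm_nonneg a]
  have hnb : normSq b < 1 := by rw [normSq_eq_norm_sq]; nlinarith [norm_nonneg b]
  have hb1 : 0 < normSq (1 - b) :=
    normSq_pos.2 (sub_ne_zero.2 fun h => by simp [← h] at hb)
  have := normSq_two_sub_sub_sub_normSq a b
  rw [norm_def, norm_def]
  refine Real.sqrt_lt_sqrt (normSq_nonneg _) ?_
  nlinarith [mul_pos (sub_pos.2 hna) hb1, mul_nonneg (sub_pos.2 hnb).le (normSq_nonneg (1 - a))]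

theorem eq_zero_and_im_eq_zero_and_one_le_re_of_forall {Q T : ℂ}
    (h : ∀ s : ℝ, (Q + I * s * T).im = 0 ∧ 1 ≤ (Q + I * s * T).re) :
    T = 0 ∧ Q.im = 0 ∧ 1 ≤ Q.re := by
  simp only [add_im, add_re, mul_im, mul_re, I_re, I_im, ofReal_re, ofReal_im, zero_mul,
    one_mul, zero_sub, zero_add, sub_zero, mul_zero] at h
  have hQ := h 0
  simp only [zero_mul, neg_zero, add_zero] at hQ
  have hTre : T.re = 0 := by linarith [(h 1).1]
  have hTim : T.im = 0 := by
    by_contra hT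
    have := (h (Q.re / T.im)).2
    rw [div_mul_cancel₀ _ hT] at this
    linarith
  exact ⟨ext hTre hTim, hQ⟩

section BoundarySchwarz

variable {u : ℂ → ℂ} {c : ℂ}

theorem one_le_re_of_hasDerivAt_of_re_le (hu : HasDerivAt u c 1) (h1 : u 1 = 1)
    (hle : ∀ t ∈ Ioo (0 : ℝ) 1, (u t).re ≤ t) : 1 ≤ c.re := by
  have hder : HasDerivAt (fun t : ℝ => (u t).re - t) (c.re - 1) 1 :=
    HasDerivAt.real_of_complex (z := 1) (by simpa using hu) |>.sub (hasDerivAt_id 1)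
  have hmax : IsLocalMaxOn (fun t : ℝ => (u t).re - t) (Iic 1) 1 := by
    filter_upwards [inter_mem_nhdsWithin (Iic 1) (Ioi_mem_nhds zero_lt_one)]
      with t ⟨ht1, ht0⟩
    rcases (mem_Iic.1 ht1).lt_or_eq with ht | rfl
    · simpa [h1] using hle t ⟨ht0, ht⟩
    · rfl
  have hcone : (0 - 1 : ℝ) ∈ posTangentConeAt (Iic 1) (1 : ℝ) :=
    sub_mem_posTangentConeAt_of_segment_subset <|
      (convex_Iic 1).segment_subset self_mem_Iic (by norm_num)
  simpa using hmax.hasFDerivWithinAt_nonpos hder.hasDerivWithinAt hcone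

theorem im_eq_zero_of_hasDerivAt_of_norm_le_one (hu : HasDerivAt u c 1) (h1 : u 1 = 1)
    (hle : ∀ᶠ z in 𝓝 1, ‖z‖ = 1 → ‖u z‖ ≤ 1) : c.im = 0 := by
  have hexp : HasDerivAt (fun θ : ℝ => exp (θ * I)) I 0 := by
    simpa using ((hasDerivAt_id (0 : ℂ)).mul_const I).cexp.comp_ofReal
  have hder : HasDerivAt (fun θ : ℝ => (u (exp (θ * I))).re) (c * I).re 0 :=
    reCLM.hasFDerivAt.comp_hasDerivAt 0 (HasDerivAt.comp 0 (by simpa using hu) hexp)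
  have hmax : IsLocalMax (fun θ : ℝ => (u (exp (θ * I))).re) 0 := by
    have hcont : Tendsto (fun θ : ℝ => exp (θ * I)) (𝓝 0) (𝓝 1) := by
      simpa using hexp.continuousAt.tendsto
    filter_upwards [hcont.eventually hle] with θ hθ
    simpa [h1] using (re_le_norm _).trans (hθ (norm_exp_ofReal_mul_I θ))
  simpa using hmax.hasDerivAt_eq_zero hder

theorem im_deriv_eq_zero_and_one_le_re_of_mapsTo_ball (hd : DifferentiableOn ℂ u (ball 0 1))
    (hmaps : MapsTo u (ball 0 1) (closedBall 0 1)) (h0 : u 0 = 0) (h1 : u 1 = 1)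
    (hext : ∀ᶠ z in 𝓝 1, DifferentiableAt ℂ u z) :
    (deriv u 1).im = 0 ∧ 1 ≤ (deriv u 1).re := by
  have hu := hext.self_of_nhds.hasDerivAt
  refine ⟨im_eq_zero_of_hasDerivAt_of_norm_le_one hu h1 ?_,
    one_le_re_of_hasDerivAt_of_re_le hu h1 fun t ht => ?_⟩
  · filter_upwards [hext] with z hz hz1
    have hzcl : z ∈ closure (ball (0 : ℂ) 1) := by
      rw [closure_ball 0 one_ne_zero]; exact mem_closedBall_zero_iff.2 hz1.le
    simpa [isClosed_closedBall.closure_eq] using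
      hz.continuousAt.continuousWithinAt.mem_closure hzcl hmaps
  · have htn : ‖(t : ℂ)‖ = t := by simp [abs_of_pos ht.1]
    calc (u t).re ≤ ‖u t‖ := re_le_norm _
      _ ≤ ‖(t : ℂ)‖ := norm_le_norm_of_mapsTo_ball hd hmaps h0 (htn.symm ▸ ht.2)
      _ = t := htn

end BoundarySchwarz

end Complex

/-- Agler and Young's magic function `Φ(ω, s, p)`. -/
noncomputable def magicFn (ω : ℂ) (w : ℂ × ℂ) : ℂ := (2 * ω * w.2 - w.1) / (2 - ω * w.1)

theorem differentiableAt_magicFn {ω : ℂ} {w : ℂ × ℂ} (h : 2 - ω * w.1 ≠ 0) :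
    DifferentiableAt ℂ (magicFn ω) w := by
  unfold magicFn
  fun_prop (disch := exact h)

theorem hasDerivAt_magicFn_comp {φ : ℂ → ℂ × ℂ} {v : ℂ × ℂ} {α ω z : ℂ}
    (hφ : HasDerivAt φ v z) (hz : φ z = (2 * α, α ^ 2)) (hωα : ω * α ≠ 1) :
    HasDerivAt (fun z => magicFn ω (φ z))
      ((2 * ω * v.2 - (1 + ω * α) * v.1) / (2 * (1 - ω * α))) z := by
  have h1 : HasDerivAt (fun z => (φ z).1) v.1 z :=
    hasFDerivAt_fst.comp_hasDerivAt (f := φ) z hφ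
  have h2 : HasDerivAt (fun z => (φ z).2) v.2 z :=
    hasFDerivAt_snd.comp_hasDerivAt (f := φ) z hφ
  have hden : 2 - ω * (φ z).1 ≠ 0 := by
    rw [hz]; intro h; apply hωα; linear_combination -h / 2
  have hden' : (1 : ℂ) - ω * α ≠ 0 := sub_ne_zero.2 (Ne.symm hωα)
  refine (((h2.const_mul (2 * ω)).sub h1).div ((h1.const_mul ω).const_sub 2) hden).congr_deriv ?_
  simp only [Pi.sub_apply]
  rw [hz]
  field_simp
  ring

/-- The royal variety `Σ`, parametrised so that `1 ↦ (2α, α²)`. -/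
def royalDisc (α z : ℂ) : ℂ × ℂ := (2 * (α * z), (α * z) ^ 2)

theorem differentiable_royalDisc (α : ℂ) : Differentiable ℂ (royalDisc α) := by
  unfold royalDisc; fun_prop

theorem hasDerivAt_royalDisc_one (α : ℂ) :
    HasDerivAt (royalDisc α) ((2 * α) • ((1 : ℂ), α)) 1 := by
  rw [Prod.smul_mk, smul_eq_mul, smul_eq_mul, mul_one]
  refine HasDerivAt.prodMk ?_ ?_
  · simpa using ((hasDerivAt_id (1 : ℂ)).const_mul α).const_mul 2
  · exact (((hasDerivAt_id (1 : ℂ)).const_mul α).fun_pow 2).congr_deriv (by simp)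

namespace G2

variable {ω : ℂ} {w : ℂ × ℂ}

theorem two_mul_sq_mem {a : ℂ} (ha : ‖a‖ < 1) : (2 * a, a ^ 2) ∈ G2 :=
  ⟨a, a, ha, ha, by ring_nf⟩

theorem mapsTo_royalDisc {α : ℂ} (hα : ‖α‖ = 1) : MapsTo (royalDisc α) (ball 0 1) G2 :=
  fun _ hz => two_mul_sq_mem (by rwa [norm_mul, hα, one_mul, ← mem_ball_zero_iff])

-- Rotating `z₁, z₂` by `ω` reduces this to the case `ω = 1`.
theorem norm_two_mul_snd_sub_fst_lt (hω : ‖ω‖ = 1) (hw : w ∈ G2) :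
    ‖2 * ω * w.2 - w.1‖ < ‖2 - ω * w.1‖ := by
  obtain ⟨z₁, z₂, h₁, h₂, rfl⟩ := hw
  have hnum : 2 * ω * (z₁ * z₂) - (z₁ + z₂) =
      conj ω * (2 * (ω * z₁) * (ω * z₂) - ω * z₁ - ω * z₂) := by
    linear_combination (z₁ + z₂ - 2 * ω * z₁ * z₂) * conj_mul_self_of_norm_eq_one hω
  have hden : 2 - ω * (z₁ + z₂) = 2 - ω * z₁ - ω * z₂ := by ring
  rw [hnum, hden, norm_mul, norm_conj, hω, one_mul]
  exact norm_two_mul_mul_sub_sub_lt (by rwa [norm_mul, hω, one_mul])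
    (by rwa [norm_mul, hω, one_mul])

theorem two_sub_mul_fst_ne_zero (hω : ‖ω‖ = 1) (hw : w ∈ G2) : 2 - ω * w.1 ≠ 0 :=
  norm_pos_iff.1 ((norm_nonneg _).trans_lt (norm_two_mul_snd_sub_fst_lt hω hw))

theorem norm_magicFn_lt_one (hω : ‖ω‖ = 1) (hw : w ∈ G2) : ‖magicFn ω w‖ < 1 := by
  rw [magicFn, norm_div, div_lt_one (norm_pos_iff.2 (two_sub_mul_fst_ne_zero hω hw))]
  exact norm_two_mul_snd_sub_fst_lt hω hw

section AnalyticDisc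

variable {φ : ℂ → ℂ × ℂ} {α : ℂ} (hα : ‖α‖ = 1)
  (hd : DifferentiableOn ℂ φ (ball 0 1)) (hmaps : MapsTo φ (ball 0 1) G2)
  (h0 : φ 0 = 0) (h1 : φ 1 = (2 * α, α ^ 2)) (hext : ∀ᶠ z in 𝓝 1, DifferentiableAt ℂ φ z)
include hα hd hmaps h0 h1 hext

theorem im_deriv_magicFn_comp_eq_zero_and_one_le_re (hω : ‖ω‖ = 1) (hωα : ω * α ≠ 1) :
    (deriv (fun z => -conj α * magicFn ω (φ z)) 1).im = 0 ∧
      1 ≤ (deriv (fun z => -conj α * magicFn ω (φ z)) 1).re := by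
  have hden1 : 2 - ω * (φ 1).1 ≠ 0 := by
    rw [h1]; intro h; apply hωα; linear_combination -h / 2
  refine Complex.im_deriv_eq_zero_and_one_le_re_of_mapsTo_ball ?_ ?_ ?_ ?_ ?_
  · intro z hz
    exact ((differentiableAt_magicFn (two_sub_mul_fst_ne_zero hω (hmaps hz))
      ).comp_differentiableWithinAt z (hd z hz)).const_mul _
  · intro z hz
    rw [mem_closedBall_zero_iff, norm_mul, norm_neg, norm_conj, hα, one_mul]
    exact (norm_magicFn_lt_one hω (hmaps hz)).le
  · simp [h0, magicFn]
  · rw [h1, magicFn]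
    field_simp
    linear_combination (1 - α * ω) * conj_mul_self_of_norm_eq_one hα
  · have hne : ∀ᶠ z in 𝓝 1, 2 - ω * (φ z).1 ≠ 0 :=
      (continuousAt_const.sub (continuousAt_const.mul
        hext.self_of_nhds.continuousAt.fst)).eventually_ne hden1
    filter_upwards [hext, hne] with z hz hzne
    exact ((differentiableAt_magicFn hzne).comp z hz).const_mul _

theorem exists_one_le_deriv_eq_smul_of_mapsTo :
    ∃ lam : ℝ, 1 ≤ lam ∧ deriv φ 1 = (2 * α * lam) • ((1 : ℂ), α) := by
  have hαα := conj_mul_self_of_norm_eq_one hα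
  have hv : HasDerivAt φ (deriv φ 1) 1 := hext.self_of_nhds.hasDerivAt
  set v := deriv φ 1
  set P := conj α * v.1 / 2
  set Q := conj α ^ 2 * v.2 / 2
  have key : ∀ s : ℝ, (Q + I * s * (P - Q)).im = 0 ∧ 1 ≤ (Q + I * s * (P - Q)).re := by
    intro s
    have hs : I * s + 1 ≠ 0 := fun h => by simpa using congrArg re h
    -- `ω = ᾱ x` with `x` the Cayley transform of `is`, which makes `g' 1` affine in `s`.
    set x := (I * s - 1) / (I * s + 1) with hxdef
    have hx : ‖x‖ = 1 := by
      have : I * s - 1 = -conj (I * s + 1) := by simp [conj_ofReal]; ring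
      rw [hxdef, this, norm_div, norm_neg, norm_conj, div_self (norm_ne_zero_iff.2 hs)]
    have hxα : conj α * x * α = x := by rw [mul_right_comm, hαα, one_mul]
    have hx1 : conj α * x * α ≠ 1 := by
      rw [hxα, hxdef, Ne, div_eq_one_iff_eq hs]
      intro h; have := congrArg re h; norm_num at this
    have hderiv : deriv (fun z => -conj α * magicFn (conj α * x) (φ z)) 1 =
        Q + I * s * (P - Q) := by
      have hx1' : 1 - x ≠ 0 := sub_ne_zero.2 (Ne.symm (hxα ▸ hx1))
      have hxmul : x * (I * s + 1) = I * s - 1 := div_mul_cancel₀ _ hs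
      rw [((hasDerivAt_magicFn_comp hv h1 hx1).const_mul _).deriv, hxα, ← mul_div_assoc,
        div_eq_iff (mul_ne_zero two_ne_zero hx1')]
      linear_combination (conj α * v.1 - conj α ^ 2 * v.2) * hxmul
    rw [← hderiv]
    exact im_deriv_magicFn_comp_eq_zero_and_one_le_re hα hd hmaps h0 h1 hext
      (by simp [hα, hx]) hx1
  obtain ⟨hPQ, hQim, hQre⟩ := Complex.eq_zero_and_im_eq_zero_and_one_le_re_of_forall key
  have hQ : Q = Q.re := ext rfl (by simp [hQim])
  refine ⟨Q.re, hQre, Prod.ext ?_ ?_⟩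
  · simp only [Prod.smul_fst, smul_eq_mul, mul_one]
    rw [← hQ, ← sub_eq_zero.1 hPQ]
    linear_combination -v.1 * hαα
  · simp only [Prod.smul_snd, smul_eq_mul]
    rw [← hQ]
    linear_combination -(1 + conj α * α) * v.2 * hαα

end AnalyticDisc

theorem exists_one_le_fderiv_apply_eq_smul {α : ℂ} (hα : ‖α‖ = 1) {f : ℂ × ℂ → ℂ × ℂ}
    (hd : DifferentiableOn ℂ f G2) (hmaps : MapsTo f G2 G2) (h0 : f (0, 0) = (0, 0))
    (hext : ∀ᶠ w in 𝓝 (2 * α, α ^ 2), DifferentiableAt ℂ f w)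
    (hfix : f (2 * α, α ^ 2) = (2 * α, α ^ 2)) :
    ∃ lam : ℝ, 1 ≤ lam ∧ fderiv ℂ f (2 * α, α ^ 2) (1, α) = (lam : ℂ) • ((1 : ℂ), α) := by
  have hroyal1 : royalDisc α 1 = (2 * α, α ^ 2) := by simp [royalDisc]
  have hroyal := hasDerivAt_royalDisc_one α
  obtain ⟨lam, hlam, hder⟩ := exists_one_le_deriv_eq_smul_of_mapsTo (φ := f ∘ royalDisc α) hα
    (hd.comp (differentiable_royalDisc α).differentiableOn (mapsTo_royalDisc hα))
    (hmaps.comp (mapsTo_royalDisc hα)) (by simp [royalDisc, h0]) (by simp [hroyal1, hfix])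
    (((hroyal1 ▸ hroyal.continuousAt.tendsto).eventually hext).mono fun z hz =>
      hz.comp z (differentiable_royalDisc α z))
  have hL : HasFDerivAt f (fderiv ℂ f (2 * α, α ^ 2)) (royalDisc α 1) :=
    hroyal1 ▸ hext.self_of_nhds.hasFDerivAt
  refine ⟨lam, hlam, smul_right_injective _ (mul_ne_zero two_ne_zero
    (norm_ne_zero_iff.1 (hα ▸ one_ne_zero))) (?_ : (2 * α) • _ = (2 * α) • _)⟩
  rw [← map_smul, ← (hL.comp_hasDerivAt 1 hroyal).deriv, hder, mul_smul]

end G2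

theorem stmt_16 (α : ℂ) (hα : ‖α‖ = 1)
    (f : ℂ × ℂ → ℂ × ℂ)
    (hd : DifferentiableOn ℂ f G2) (hmaps : Set.MapsTo f G2 G2)
    (h0 : f (0, 0) = (0, 0))
    (z₀ : ℂ × ℂ) (hz₀ : z₀ = (2 * α, α ^ 2))
    (hext : ∀ᶠ w in nhds z₀, DifferentiableAt ℂ f w)
    (hfix : f z₀ = z₀) :
    ∃ lam : ℝ,
      (lam : ℂ) = fderiv ℂ (fun w => (f w).1) z₀ (1, 0)
          + α * fderiv ℂ (fun w => (f w).1) z₀ (0, 1) ∧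
      (lam : ℂ) = conj α * fderiv ℂ (fun w => (f w).2) z₀ (1, 0)
          + fderiv ℂ (fun w => (f w).2) z₀ (0, 1) ∧
      1 ≤ lam ∧
      fderiv ℂ f z₀ (1, α) = (lam : ℂ) • ((1 : ℂ), α) := by
  subst hz₀
  have hdiff : DifferentiableAt ℂ f (2 * α, α ^ 2) := hext.self_of_nhds
  obtain ⟨lam, hlam, heig⟩ := G2.exists_one_le_fderiv_apply_eq_smul hα hd hmaps h0 hext hfix
  set L := fderiv ℂ f (2 * α, α ^ 2)
  have hsplit : L (1, α) = L (1, 0) + α • L (0, 1) := by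
    rw [← map_smul, ← map_add]; simp
  refine ⟨lam, ?_, ?_, hlam, heig⟩
  · simpa [fderiv.fst hdiff] using (congrArg Prod.fst (hsplit.symm.trans heig)).symm
  · have := congrArg Prod.snd (hsplit.symm.trans heig)
    simp only [Prod.snd_add, Prod.smul_snd, smul_eq_mul, Prod.smul_mk] at this
    simp only [fderiv.snd hdiff, ContinuousLinearMap.coe_comp, Function.comp_apply,
      ContinuousLinearMap.coe_snd']
    linear_combination (-conj α) * this + ((L (0, 1)).2 - lam) * conj_mul_self_of_norm_eq_one hα
end

section
/- Let h : G₂ → D be holomorphic with h(0,0) = 0, let θ ∈ [0,2π), and z₀ = (0, e^{iθ}) ∈ ∂G₂. If h extends holomorphically to a neighborhood of z₀ and h(z₀) = ω e^{iθ} for some ω with |ω| = 1, then ω̄·∂h/∂p(z₀) is real with ω̄·∂h/∂p(z₀) ≥ 1, and |∂h/∂s(z₀)| ≤ ω̄·∂h/∂p(z₀). -/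
/-!
Compose `h` with holomorphic discs `D : 𝔻 → G₂` through `D 1 = z₀` and normalize:
`F = conj (h z₀) * (h ∘ D)` is a self-map of the disc with `F 1 = 1`. Since
`Re (1 - F (1 - t c)) ≥ 0` whenever `1 - t c ∈ 𝔻`, which holds for small `t > 0` once `Re c > 0`,
`Re (F'(1) c) ≥ 0` on the right half-plane and, by continuity, at `c = ± i`; so `F'(1)` is a
nonnegative real. If also `F 0 = 0`, Schwarz's lemma sharpens this to `F'(1) ≥ 1`.
The disc `z ↦ (0, e^{iθ} z)` gives `v := ω̄ ∂h/∂p(z₀) ≥ 1`. Writing `e^{iθ} = -ζ²`, the discs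
`z ↦ (ζ (a - b), e^{iθ} a b)` with `a, b` affine self-maps of `𝔻` fixing `1` with slopes
`s, r ∈ (0, 1]` give `(s - r) u + (s + r) v ≥ 0`, where `|u| = |∂h/∂s(z₀)|`;
letting `r → 0` and `s → 0` yields `-v ≤ u ≤ v`.
-/

open Complex ComplexConjugate

open Filter Metric Set Topology
open scoped ComplexOrder

lemma le_re_mul_of_hasDerivAt_of_re_le {F : ℂ → ℂ} {d c : ℂ} {k : ℝ} (hF : HasDerivAt F d 1)
    (hle : ∀ᶠ t : ℝ in 𝓝[>] 0, (F (1 - t * c)).re ≤ (F 1).re - k * t) :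
    k ≤ (d * c).re := by
  have hline : HasDerivAt (fun z : ℂ => 1 - z * c) (-c) ((0 : ℝ) : ℂ) := by
    simpa using ((hasDerivAt_id _).mul_const c).const_sub 1
  have hF' : HasDerivAt F d (1 - ((0 : ℝ) : ℂ) * c) := by simpa using hF
  have hslope :=
    (hF'.comp (h := fun z : ℂ => 1 - z * c) _ hline).real_of_complex.tendsto_slope_zero_right
  have hlim : (d * -c).re ≤ -k := by
    refine le_of_tendsto hslope ?_
    filter_upwards [hle, self_mem_nhdsWithin] with t ht (htpos : 0 < t)
    rw [smul_eq_mul, inv_mul_le_iff₀ htpos]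
    simp only [Function.comp_apply, ofReal_zero, zero_add, zero_mul, sub_zero]
    linarith
  simp only [mul_neg, neg_re] at hlim
  linarith

lemma eventually_one_sub_mul_mem_ball {c : ℂ} (hc : 0 < c.re) :
    ∀ᶠ t : ℝ in 𝓝[>] 0, 1 - t * c ∈ ball (0 : ℂ) 1 := by
  have hc0 : 0 < normSq c := normSq_pos.mpr (fun h => by simp [h] at hc)
  filter_upwards [Ioo_mem_nhdsGT (div_pos hc hc0)] with t ⟨ht0, ht⟩
  rw [mem_ball_zero_iff, ← sq_lt_one_iff₀ (norm_nonneg _), Complex.sq_norm]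
  rw [lt_div_iff₀ hc0] at ht
  have : normSq (1 - t * c) = 1 - 2 * t * c.re + t ^ 2 * normSq c := by
    simp only [normSq_apply, sub_re, sub_im, one_re, one_im, mul_re, mul_im, ofReal_re, ofReal_im]
    ring
  rw [this]
  nlinarith

lemma nonneg_of_hasDerivAt_of_mapsTo_closedBall {F : ℂ → ℂ} {d : ℂ} (hF : HasDerivAt F d 1)
    (h1 : F 1 = 1) (hmaps : MapsTo F (ball 0 1) (closedBall 0 1)) : 0 ≤ d := by
  have hhalf : ∀ c ∈ {c : ℂ | 0 < c.re}, 0 ≤ (d * c).re := fun c hc => by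
    refine le_re_mul_of_hasDerivAt_of_re_le (k := 0) hF ?_
    filter_upwards [eventually_one_sub_mul_mem_ball hc] with t ht
    have := mem_closedBall_zero_iff.mp (hmaps ht)
    rw [h1, one_re, zero_mul, sub_zero]
    exact (re_le_norm _).trans this
  have hclosed : closure {c : ℂ | 0 < c.re} ⊆ {c : ℂ | 0 ≤ (d * c).re} :=
    closure_minimal hhalf (isClosed_le continuous_const (by fun_prop))
  rw [closure_setOfPred_lt_re] at hclosed
  have hre := hhalf 1 (by simp)
  have hI := hclosed (show (0 : ℝ) ≤ I.re by simp)
  have hnegI := hclosed (show (0 : ℝ) ≤ (-I).re by simp)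
  simp only [mem_ofPred_eq, mul_one, mul_neg, neg_re, mul_I_re] at hre hI hnegI
  exact nonneg_iff.mpr ⟨hre, by linarith⟩

lemma one_le_re_of_hasDerivAt_of_mapsTo_closedBall {F : ℂ → ℂ} {d : ℂ} (hF : HasDerivAt F d 1)
    (h1 : F 1 = 1) (hd : DifferentiableOn ℂ F (ball 0 1))
    (hmaps : MapsTo F (ball 0 1) (closedBall 0 1)) (h0 : F 0 = 0) : 1 ≤ d.re := by
  simpa using le_re_mul_of_hasDerivAt_of_re_le (c := 1) (k := 1) hF (by
    filter_upwards [Ioo_mem_nhdsGT one_pos] with t ⟨ht0, ht1⟩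
    have hnorm : ‖1 - (t : ℂ) * 1‖ = 1 - t := by
      rw [mul_one, ← ofReal_one, ← ofReal_sub, norm_real, Real.norm_of_nonneg (by linarith)]
    have := norm_le_norm_of_mapsTo_ball hd hmaps h0 (hnorm ▸ (by linarith : 1 - t < 1))
    rw [h1, one_re, one_mul, ← hnorm]
    exact (re_le_norm _).trans this)

lemma ofReal_norm_le_of_forall_nonneg {u v : ℂ}
    (huv : ∀ s r : ℝ, s ∈ Ioc 0 1 → r ∈ Ioc 0 1 → 0 ≤ (s - r) * u + (s + r) * v) :
    (‖u‖ : ℂ) ≤ v := by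
  have hnear : ∀ᶠ t : ℝ in 𝓝[>] 0, t ∈ Ioc 0 1 := Ioc_mem_nhdsGT one_pos
  have hplus : 0 ≤ v + u := by
    refine ge_of_tendsto ?_ (hnear.mono fun r hr => huv 1 r (by simp) hr)
    have hc : Continuous fun r : ℝ => ((1 : ℝ) - r : ℂ) * u + ((1 : ℝ) + r) * v := by fun_prop
    simpa [add_comm] using (hc.tendsto 0).mono_left nhdsWithin_le_nhds
  have hminus : 0 ≤ v - u := by
    refine ge_of_tendsto ?_ (hnear.mono fun s hs => huv s 1 hs (by simp))
    have hc : Continuous fun s : ℝ => ((s : ℂ) - (1 : ℝ)) * u + (s + (1 : ℝ)) * v := by fun_prop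
    simpa [sub_eq_neg_add] using (hc.tendsto 0).mono_left nhdsWithin_le_nhds
  rw [nonneg_iff, add_re, add_im] at hplus
  rw [nonneg_iff, sub_re, sub_im] at hminus
  have hu : u.im = 0 := by linarith
  rw [Complex.le_def, ← abs_re_eq_norm.mpr hu, ofReal_re, ofReal_im]
  exact ⟨abs_le.mpr ⟨by linarith, by linarith⟩, by linarith⟩

section Disc

variable {E : Type*} [NormedAddCommGroup E] [NormedSpace ℂ E] {h : E → ℂ} {U : Set E} {z₀ : E}
  {L : E →L[ℂ] ℂ} {D : ℂ → E} {D' : E}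

lemma conj_mul_comp_of_disc (hmaps : MapsTo h U (ball 0 1)) (hz₀ : ‖h z₀‖ = 1)
    (hL : HasFDerivAt h L z₀) (hD : MapsTo D (ball 0 1) U) (hD1 : D 1 = z₀)
    (hD' : HasDerivAt D D' 1) :
    conj (h z₀) * h (D 1) = 1 ∧
      HasDerivAt (fun z => conj (h z₀) * h (D z)) (conj (h z₀) * L D') 1 ∧
      MapsTo (fun z => conj (h z₀) * h (D z)) (ball 0 1) (closedBall 0 1) := by
  refine ⟨?_, ?_, fun z hz => ?_⟩
  · rw [hD1, conj_mul', hz₀]; norm_num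
  · exact ((hD1 ▸ hL).comp_hasDerivAt 1 hD').const_mul _
  · rw [mem_closedBall_zero_iff, norm_mul, norm_conj, hz₀, one_mul]
    exact (mem_ball_zero_iff.mp (hmaps (hD hz))).le

lemma nonneg_conj_mul_of_disc (hmaps : MapsTo h U (ball 0 1)) (hz₀ : ‖h z₀‖ = 1)
    (hL : HasFDerivAt h L z₀) (hD : MapsTo D (ball 0 1) U) (hD1 : D 1 = z₀)
    (hD' : HasDerivAt D D' 1) : 0 ≤ conj (h z₀) * L D' :=
  let ⟨h1, hderiv, hmapsF⟩ := conj_mul_comp_of_disc hmaps hz₀ hL hD hD1 hD'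
  nonneg_of_hasDerivAt_of_mapsTo_closedBall hderiv h1 hmapsF

lemma one_le_re_conj_mul_of_disc (hd : DifferentiableOn ℂ h U) (hmaps : MapsTo h U (ball 0 1))
    (hz₀ : ‖h z₀‖ = 1) (hL : HasFDerivAt h L z₀) (hDd : DifferentiableOn ℂ D (ball 0 1))
    (hD : MapsTo D (ball 0 1) U) (hD0 : h (D 0) = 0) (hD1 : D 1 = z₀)
    (hD' : HasDerivAt D D' 1) : 1 ≤ (conj (h z₀) * L D').re := by
  obtain ⟨h1, hderiv, hmapsF⟩ := conj_mul_comp_of_disc hmaps hz₀ hL hD hD1 hD'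
  refine one_le_re_of_hasDerivAt_of_mapsTo_closedBall hderiv h1 ?_ hmapsF (by simp [hD0])
  exact (hd.comp hDd hD).const_mul _

end Disc

lemma prod_zero_mem_G2 {c : ℂ} (hc : ‖c‖ < 1) : (0, c) ∈ G2 := by
  obtain ⟨r, hr⟩ := IsAlgClosed.exists_pow_nat_eq (-c) two_pos
  have hr1 : ‖r‖ < 1 := by
    rw [← sq_lt_one_iff₀ (norm_nonneg r), ← norm_pow, hr, norm_neg]
    exact hc
  exact ⟨r, -r, hr1, by rwa [norm_neg], Prod.ext (by simp) (by linear_combination hr)⟩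

lemma mem_G2_of_sq_eq_neg {ζ e a b : ℂ} (hζ : ‖ζ‖ ≤ 1) (hζe : ζ ^ 2 = -e) (ha : ‖a‖ < 1)
    (hb : ‖b‖ < 1) : (ζ * (a - b), e * (a * b)) ∈ G2 := by
  refine ⟨ζ * a, -(ζ * b), ?_, ?_, ?_⟩
  · rw [norm_mul]; nlinarith [norm_nonneg ζ, norm_nonneg a]
  · rw [norm_neg, norm_mul]; nlinarith [norm_nonneg ζ, norm_nonneg b]
  · exact Prod.ext (by ring) (by linear_combination (a * b) * hζe)

lemma norm_one_add_mul_sub_one_lt {s : ℝ} (hs : s ∈ Ioc 0 1) {z : ℂ} (hz : ‖z‖ < 1) :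
    ‖1 + s * (z - 1)‖ < 1 := by
  obtain ⟨hs0, hs1⟩ := hs
  calc ‖1 + s * (z - 1)‖ = ‖((1 - s : ℝ) : ℂ) + s * z‖ := by push_cast; ring_nf
    _ ≤ (1 - s) + s * ‖z‖ := by
      refine (norm_add_le _ _).trans ?_
      rw [norm_real, norm_mul, norm_real, Real.norm_of_nonneg (by linarith),
        Real.norm_of_nonneg hs0.le]
    _ < 1 := by nlinarith

lemma ContinuousLinearMap.map_prod_eq {L : ℂ × ℂ →L[ℂ] ℂ} (x y : ℂ) :
    L (x, y) = x * L (1, 0) + y * L (0, 1) := by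
  rw [← smul_eq_mul, ← smul_eq_mul, ← map_smul, ← map_smul, ← map_add]
  simp

section G2

variable {h : ℂ × ℂ → ℂ} {L : ℂ × ℂ →L[ℂ] ℂ} {e : ℂ}

lemma one_le_re_conj_mul_of_radial_disc (hd : DifferentiableOn ℂ h G2)
    (hmaps : MapsTo h G2 (ball 0 1)) (h0 : h (0, 0) = 0) (he : ‖e‖ ≤ 1)
    (hh : ‖h (0, e)‖ = 1) (hL : HasFDerivAt h L (0, e)) :
    1 ≤ (conj (h (0, e)) * e * L (0, 1)).re := by
  have hD : MapsTo (fun z : ℂ => ((0 : ℂ), e * z)) (ball 0 1) G2 := fun z hz => by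
    refine prod_zero_mem_G2 ?_
    rw [norm_mul]
    nlinarith [mem_ball_zero_iff.mp hz, norm_nonneg z]
  have hD' : HasDerivAt (fun z : ℂ => ((0 : ℂ), e * z)) (0, e) 1 :=
    (hasDerivAt_const _ _).prodMk (by simpa using (hasDerivAt_id _).const_mul e)
  have := one_le_re_conj_mul_of_disc hd hmaps hh hL (by fun_prop) hD (by simpa using h0)
    (by simp) hD'
  rwa [L.map_prod_eq, zero_mul, zero_add, ← mul_assoc] at this

lemma nonneg_of_affine_discs (hmaps : MapsTo h G2 (ball 0 1)) {ζ : ℂ} (hζ : ‖ζ‖ ≤ 1)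
    (hζe : ζ ^ 2 = -e) (hh : ‖h (0, e)‖ = 1) (hL : HasFDerivAt h L (0, e)) {s r : ℝ}
    (hs : s ∈ Ioc 0 1) (hr : r ∈ Ioc 0 1) :
    0 ≤ (s - r) * (conj (h (0, e)) * ζ * L (1, 0)) +
      (s + r) * (conj (h (0, e)) * e * L (0, 1)) := by
  set a : ℂ → ℂ := fun z => 1 + s * (z - 1)
  set b : ℂ → ℂ := fun z => 1 + r * (z - 1)
  have ha : HasDerivAt a s 1 := by
    show HasDerivAt (fun z : ℂ => 1 + s * (z - 1)) s 1
    simpa using ((hasDerivAt_id _).sub_const 1).const_mul (s : ℂ) |>.const_add 1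
  have hb : HasDerivAt b r 1 := by
    show HasDerivAt (fun z : ℂ => 1 + r * (z - 1)) r 1
    simpa using ((hasDerivAt_id _).sub_const 1).const_mul (r : ℂ) |>.const_add 1
  have hD' : HasDerivAt (fun z => (ζ * (a z - b z), e * (a z * b z)))
      (ζ * (s - r), e * (s + r)) 1 := by
    refine ((ha.sub hb).const_mul ζ).prodMk ?_
    simpa [a, b] using (ha.mul hb).const_mul e
  have hD : MapsTo (fun z => (ζ * (a z - b z), e * (a z * b z))) (ball 0 1) G2 := fun z hz =>
    mem_G2_of_sq_eq_neg hζ hζe (norm_one_add_mul_sub_one_lt hs (mem_ball_zero_iff.mp hz))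
      (norm_one_add_mul_sub_one_lt hr (mem_ball_zero_iff.mp hz))
  convert nonneg_conj_mul_of_disc hmaps hh hL hD (by simp [a, b]) hD' using 1
  rw [L.map_prod_eq (ζ * (s - r))]
  ring

end G2

theorem stmt_17_general (θ : ℝ)
    (h : ℂ × ℂ → ℂ)
    (hd : DifferentiableOn ℂ h G2) (hmaps : Set.MapsTo h G2 (Metric.ball (0 : ℂ) 1))
    (h0 : h (0, 0) = 0)
    (z₀ : ℂ × ℂ) (hz₀ : z₀ = (0, Complex.exp (θ * Complex.I)))
    (hext : ∀ᶠ w in nhds z₀, DifferentiableAt ℂ h w)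
    (ω : ℂ) (hω : ‖ω‖ = 1)
    (hval : h z₀ = ω * Complex.exp (θ * Complex.I)) :
    ∃ lam : ℝ,
      (lam : ℂ) = conj ω * fderiv ℂ h z₀ (0, 1) ∧ 1 ≤ lam ∧
      ‖fderiv ℂ h z₀ (1, 0)‖ ≤ lam := by
  subst hz₀
  set e := exp (θ * I)
  have he : ‖e‖ = 1 := norm_exp_ofReal_mul_I θ
  obtain ⟨ζ, hζ⟩ := IsAlgClosed.exists_pow_nat_eq (-e) two_pos
  have hζ1 : ‖ζ‖ = 1 := by
    rw [← pow_left_inj₀ (norm_nonneg ζ) zero_le_one two_ne_zero, ← norm_pow, hζ, norm_neg, he,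
      one_pow]
  have hh : ‖h (0, e)‖ = 1 := by rw [hval, norm_mul, hω, he, one_mul]
  have hL := hext.self_of_nhds.hasFDerivAt
  have hconj : conj (h (0, e)) * e = conj ω := by
    rw [hval, map_mul, mul_assoc, conj_mul', he]
    simp
  have hnorm := ofReal_norm_le_of_forall_nonneg fun s r hs hr =>
    nonneg_of_affine_discs hmaps hζ1.le hζ hh hL hs hr
  have hone := one_le_re_conj_mul_of_radial_disc hd hmaps h0 he.le hh hL
  rw [hconj] at hnorm hone
  refine ⟨(conj ω * fderiv ℂ h (0, e) (0, 1)).re, (eq_re_of_ofReal_le hnorm).symm, hone, ?_⟩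
  simpa [hh, hζ1] using (Complex.le_def.mp hnorm).1

theorem stmt_17 (θ : ℝ) (hθ : θ ∈ Set.Ico 0 (2 * Real.pi))
    (h : ℂ × ℂ → ℂ)
    (hd : DifferentiableOn ℂ h G2) (hmaps : Set.MapsTo h G2 (Metric.ball (0 : ℂ) 1))
    (h0 : h (0, 0) = 0)
    (z₀ : ℂ × ℂ) (hz₀ : z₀ = (0, Complex.exp (θ * Complex.I)))
    (hext : ∀ᶠ w in nhds z₀, DifferentiableAt ℂ h w)
    (ω : ℂ) (hω : ‖ω‖ = 1)
    (hval : h z₀ = ω * Complex.exp (θ * Complex.I)) :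
    ∃ lam : ℝ,
      (lam : ℂ) = conj ω * fderiv ℂ h z₀ (0, 1) ∧ 1 ≤ lam ∧
      ‖fderiv ℂ h z₀ (1, 0)‖ ≤ lam :=
  stmt_17_general θ h hd hmaps h0 z₀ hz₀ hext ω hω hval
end

section
/- Let φ = (φ₁,φ₂) : D → G₂ be holomorphic with φ(0) = (0,0), let λ ∈ ∂D, and z₀ = (2α, α²) ∈ ∂G₂ with |α| = 1. If φ extends holomorphically to a neighborhood of λ and φ(λ) = z₀, then φ₁'(λ) = ᾱ·φ₂'(λ), and λᾱ·φ₁'(λ) is a real number with λᾱ·φ₁'(λ) ≥ 2. -/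
open Complex ComplexConjugate

/-!
For every unimodular `ω`, the Agler–Young function `Φ_ω(s, p) = (2ωp - s)/(2 - ωs)` maps `G₂`
into the disc, so `g = Φ_ω ∘ φ` is a self-map of the disc fixing `0` (hence `|g z| ≤ |z|`), and
`g(λ) = -α` is unimodular. A boundary Schwarz lemma then makes `λ · conj (g λ) · g'(λ)` real and
at least `1`. Letting `ω = ᾱ (is - 1)/(is + 1)` run over the circle, this quantity is
`λᾱ (ᾱφ₂'(λ) + is (φ₁'(λ) - ᾱφ₂'(λ))) / 2`; a complex number `v + is z` that is real and `≥ 2`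
for all real `s` must have `z = 0`, which gives both claims.
-/

open Metric Set

theorem norm_two_mul_mul_sub_add_lt {a b : ℂ} (ha : ‖a‖ < 1) (hb : ‖b‖ < 1) :
    ‖2 * a * b - (a + b)‖ < ‖2 - (a + b)‖ := by
  have hdiff : normSq (2 - (a + b)) - normSq (2 * a * b - (a + b)) =
      4 * (1 - normSq a * normSq b - a.re * (1 - normSq b) - b.re * (1 - normSq a)) := by
    simp only [normSq_apply, sub_re, sub_im, add_re, add_im, mul_re, mul_im, re_ofNat, im_ofNat]
    ring
  -- with `x = ‖a‖` and `y = ‖b‖` the bracket is at least `(1 - x) (1 - y) (1 - x y)`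
  have hpos : 0 < 1 - normSq a * normSq b - a.re * (1 - normSq b) - b.re * (1 - normSq a) := by
    rw [normSq_eq_norm_sq, normSq_eq_norm_sq]
    have hx : 0 ≤ ‖a‖ := norm_nonneg a
    have hy : 0 ≤ ‖b‖ := norm_nonneg b
    nlinarith [mul_nonneg (sub_nonneg.2 (re_le_norm a))
        (sub_nonneg.2 (pow_le_one₀ (n := 2) hy hb.le)),
      mul_nonneg (sub_nonneg.2 (re_le_norm b)) (sub_nonneg.2 (pow_le_one₀ (n := 2) hx ha.le)),
      mul_pos (mul_pos (sub_pos.2 ha) (sub_pos.2 hb))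
        (sub_pos.2 (mul_lt_one_of_nonneg_of_lt_one_left hx ha hb.le))]
  rw [← sq_lt_sq₀ (norm_nonneg _) (norm_nonneg _), Complex.sq_norm, Complex.sq_norm]
  linarith

theorem norm_two_mul_snd_sub_fst_lt_of_mem_G2 {ω : ℂ} (hω : ‖ω‖ = 1) {x : ℂ × ℂ} (hx : x ∈ G2) :
    ‖2 * ω * x.2 - x.1‖ < ‖2 - ω * x.1‖ := by
  obtain ⟨z₁, z₂, h₁, h₂, rfl⟩ := hx
  have hωω : conj ω * ω = 1 := by
    rw [← inv_eq_conj hω, inv_mul_cancel₀ (by simp [← norm_pos_iff, hω])]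
  calc ‖2 * ω * (z₁ * z₂) - (z₁ + z₂)‖
      = ‖conj ω * (2 * (ω * z₁) * (ω * z₂) - (ω * z₁ + ω * z₂))‖ := by
        congr 1; linear_combination (z₁ + z₂ - 2 * ω * z₁ * z₂) * hωω
    _ = ‖2 * (ω * z₁) * (ω * z₂) - (ω * z₁ + ω * z₂)‖ := by rw [norm_mul, norm_conj, hω, one_mul]
    _ < ‖2 - (ω * z₁ + ω * z₂)‖ :=
        norm_two_mul_mul_sub_add_lt (by simpa [hω] using h₁) (by simpa [hω] using h₂)
    _ = ‖2 - ω * (z₁ + z₂)‖ := by ring_nf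

noncomputable def Φ (ω : ℂ) (x : ℂ × ℂ) : ℂ := (2 * ω * x.2 - x.1) / (2 - ω * x.1)

theorem two_sub_mul_fst_ne_zero_of_mem_G2 {ω : ℂ} (hω : ‖ω‖ = 1) {x : ℂ × ℂ} (hx : x ∈ G2) :
    2 - ω * x.1 ≠ 0 :=
  norm_pos_iff.1 ((norm_nonneg _).trans_lt (norm_two_mul_snd_sub_fst_lt_of_mem_G2 hω hx))

theorem norm_Φ_lt_one {ω : ℂ} (hω : ‖ω‖ = 1) {x : ℂ × ℂ} (hx : x ∈ G2) : ‖Φ ω x‖ < 1 := by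
  rw [Φ, norm_div, div_lt_one (norm_pos_iff.2 (two_sub_mul_fst_ne_zero_of_mem_G2 hω hx))]
  exact norm_two_mul_snd_sub_fst_lt_of_mem_G2 hω hx

theorem im_eq_zero_and_re_nonneg_of_forall_re_pos {B : ℂ}
    (h : ∀ w : ℂ, 0 < w.re → 0 ≤ (B * w).re) : B.im = 0 ∧ 0 ≤ B.re := by
  refine ⟨by_contra fun hB => ?_, by simpa using h 1 one_pos⟩
  have h' := h (1 + ((B.re + 1) / B.im : ℝ) * I) (by simp)
  simp only [mul_re, add_re, add_im, one_re, one_im, mul_im, ofReal_re, ofReal_im, I_re, I_im] at h'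
  have : B.im * ((B.re + 1) / B.im) = B.re + 1 := mul_div_cancel₀ _ hB
  nlinarith

theorem exists_pos_mul_one_sub_mul_mem_ball {lam w : ℂ} (hlam : ‖lam‖ = 1) (hw : 0 < w.re) :
    ∃ r : ℝ, 0 < r ∧ lam * (1 - r * w) ∈ ball 0 1 := by
  have hw0 : 0 < normSq w := normSq_pos.2 (by rintro rfl; simp at hw)
  set r := w.re / normSq w
  have hr : 0 < r := div_pos hw hw0
  have hrw : r * (w.re * w.re + w.im * w.im) = w.re := div_mul_cancel₀ _ hw0.ne'
  refine ⟨r, hr, ?_⟩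
  rw [mem_ball_zero_iff, norm_mul, hlam, one_mul, ← sq_lt_one_iff₀ (norm_nonneg _),
    Complex.sq_norm, normSq_apply]
  simp only [sub_re, sub_im, one_re, one_im, mul_re, mul_im, ofReal_re, ofReal_im]
  nlinarith

theorem im_eq_zero_and_one_le_re_of_norm_le_norm {g : ℂ → ℂ} {d lam : ℂ}
    (hg : ∀ z, ‖z‖ < 1 → ‖g z‖ ≤ ‖z‖) (hlam : ‖lam‖ = 1) (hder : HasDerivAt g d lam)
    (hval : ‖g lam‖ = 1) :
    (lam * conj (g lam) * d).im = 0 ∧ 1 ≤ (lam * conj (g lam) * d).re := by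
  set A := lam * conj (g lam) * d
  -- `‖z‖² - ‖g z‖²` is `≥ 0` on the disc and `0` at `lam`: its derivative at `lam` is `≥ 0` inwards
  have hmin : IsLocalMinOn (fun z => ‖z‖ ^ 2 - ‖g z‖ ^ 2) (ball 0 1) lam := by
    refine Filter.eventually_of_mem self_mem_nhdsWithin fun z hz => ?_
    simp only [hlam, hval, sub_self, sub_nonneg]
    gcongr
    exact hg z (mem_ball_zero_iff.mp hz)
  have hF := (hasFDerivAt_id lam).norm_sq.sub (hder.hasFDerivAt.restrictScalars ℝ).norm_sq
  have hll : lam * conj lam = 1 := by rw [mul_conj, normSq_eq_norm_sq, hlam]; norm_num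
  have hcone : ∀ w : ℂ, 0 < w.re → 0 ≤ ((A - 1) * w).re := by
    intro w hw
    obtain ⟨r, hr, hy⟩ := exists_pos_mul_one_sub_mul_mem_ball hlam hw
    set y := lam * (1 - r * w)
    have hlamy : lam ≠ y := fun h => by
      rw [← h, mem_ball_zero_iff, hlam] at hy; exact lt_irrefl _ hy
    have hderiv := hmin.hasFDerivWithinAt_nonneg hF.hasFDerivWithinAt
      (sub_mem_posTangentConeAt_of_openSegment_subset (openSegment_subset_ball_of_ne
        (mem_closedBall_zero_iff.2 hlam.le) (ball_subset_closedBall hy) hlamy))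
    have e1 : (y - lam) * conj lam = -(r * w) := by linear_combination (-(r * w)) * hll
    have e2 : (y - lam) * d * conj (g lam) = -(r * (A * w)) := by simp only [y, A]; ring
    simp only [sub_apply, smul_apply, ContinuousLinearMap.comp_apply, innerSL_apply_apply,
      Complex.inner, id, ContinuousLinearMap.id_apply, ContinuousLinearMap.coe_restrictScalars',
      ContinuousLinearMap.toSpanSingleton_apply, smul_eq_mul, e1, e2, neg_re, re_ofReal_mul,
      nsmul_eq_mul, Nat.cast_ofNat] at hderiv
    rw [sub_mul, sub_re, one_mul]
    nlinarith
  obtain ⟨him, hre⟩ := im_eq_zero_and_re_nonneg_of_forall_re_pos hcone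
  exact ⟨by simpa using him, by simpa using hre⟩

theorem eq_and_two_le_of_forall_real {c a b : ℂ}
    (h : ∀ s : ℝ, (c * (b + I * s * (a - b))).im = 0 ∧ 2 ≤ (c * (b + I * s * (a - b))).re) :
    a = b ∧ (c * a).im = 0 ∧ 2 ≤ (c * a).re := by
  obtain ⟨hb_im, hb_re⟩ := h 0
  obtain ⟨h1_im, -⟩ := h 1
  set z := c * (a - b)
  have hexpand : ∀ s : ℝ, c * (b + I * s * (a - b)) = c * b + I * s * z := fun s => by ring
  simp only [hexpand, ofReal_zero, mul_zero, zero_mul, add_zero] at hb_im hb_re h1_im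
  have hz : z = 0 := by
    refine Complex.ext (by simpa [hb_im] using h1_im) (by_contra fun hz => ?_)
    have h' := (h ((c * b).re / z.im)).2
    rw [hexpand, add_re, mul_assoc, I_mul_re, im_ofReal_mul, div_mul_cancel₀ _ hz] at h'
    linarith
  have hc : c ≠ 0 := by rintro rfl; norm_num at hb_re
  have hab : a = b := sub_eq_zero.1 ((mul_eq_zero.1 hz).resolve_left hc)
  subst hab
  exact ⟨rfl, hb_im, hb_re⟩

section
variable {φ : ℂ → ℂ × ℂ} {α lam : ℂ}

theorem norm_Φ_comp_le_norm {ω : ℂ} (hω : ‖ω‖ = 1) (hd : DifferentiableOn ℂ φ (ball 0 1))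
    (hmaps : MapsTo φ (ball 0 1) G2) (h0 : φ 0 = (0, 0)) {z : ℂ} (hz : ‖z‖ < 1) :
    ‖Φ ω (φ z)‖ ≤ ‖z‖ := by
  refine Complex.norm_le_norm_of_mapsTo_ball (f := fun z => Φ ω (φ z)) ?_ ?_ (by simp [Φ, h0]) hz
  · exact ((hd.snd.const_mul _).sub hd.fst).div ((hd.fst.const_mul ω).const_sub 2)
      fun z hz => two_sub_mul_fst_ne_zero_of_mem_G2 hω (hmaps hz)
  · exact fun z hz => ball_subset_closedBall (mem_ball_zero_iff.2 (norm_Φ_lt_one hω (hmaps hz)))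

theorem im_eq_zero_and_two_le_re_of_mapsTo_G2 (hα : ‖α‖ = 1) (hd : DifferentiableOn ℂ φ (ball 0 1))
    (hmaps : MapsTo φ (ball 0 1) G2) (h0 : φ 0 = (0, 0)) (hlam : ‖lam‖ = 1)
    (hval : φ lam = (2 * α, α ^ 2)) {S' P' : ℂ}
    (hS : HasDerivAt (fun z => (φ z).1) S' lam) (hP : HasDerivAt (fun z => (φ z).2) P' lam)
    (s : ℝ) :
    (lam * conj α * (conj α * P' + I * s * (S' - conj α * P'))).im = 0 ∧
      2 ≤ (lam * conj α * (conj α * P' + I * s * (S' - conj α * P'))).re := by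
  have hα0 : α ≠ 0 := by rintro rfl; simp at hα
  have hs : I * s + 1 ≠ 0 := fun h => by simpa using congrArg re h
  set ω := α⁻¹ * ((I * s - 1) / (I * s + 1))
  have hω : ‖ω‖ = 1 := by
    have : ‖I * s - 1‖ = ‖I * s + 1‖ := by
      rw [← sq_eq_sq₀ (norm_nonneg _) (norm_nonneg _), Complex.sq_norm, Complex.sq_norm]
      simp [normSq_apply]
    rw [norm_mul, norm_div, this, div_self (norm_ne_zero_iff.2 hs), norm_inv, hα]
    norm_num
  have hden : 2 - ω * (φ lam).1 ≠ 0 := by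
    have : 2 - ω * (2 * α) = 4 / (I * s + 1) := by simp only [ω]; field_simp; ring
    rw [hval, this]
    exact div_ne_zero (by norm_num) hs
  obtain ⟨D, hder, hD⟩ : ∃ D, HasDerivAt (fun z => Φ ω (φ z)) D lam ∧
      2 * (lam * conj (-α) * D) = lam * conj α * (conj α * P' + I * s * (S' - conj α * P')) := by
    refine ⟨_, ((hP.const_mul (2 * ω)).sub hS).div ((hS.const_mul ω).const_sub 2) hden, ?_⟩
    rw [map_neg, ← inv_eq_conj hα]
    simp only [Pi.sub_apply, hval, ω]
    field_simp
    ring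
  have hglam : Φ ω (φ lam) = -α := by
    rw [Φ, div_eq_iff hden, hval]
    simp only [ω]
    field_simp
    ring
  obtain ⟨him, hre⟩ := im_eq_zero_and_one_le_re_of_norm_le_norm
    (fun z hz => norm_Φ_comp_le_norm hω hd hmaps h0 hz) hlam hder (by simp [hglam, hα])
  rw [hglam] at him hre
  rw [← hD]
  set X := lam * conj (-α) * D
  simp only [mul_re, mul_im, re_ofNat, im_ofNat, zero_mul, sub_zero, add_zero]
  exact ⟨by rw [him, mul_zero], by linarith⟩

end

theorem stmt_19 (α : ℂ) (hα : ‖α‖ = 1) (φ : ℂ → ℂ × ℂ)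
    (hd : DifferentiableOn ℂ φ (Metric.ball (0 : ℂ) 1))
    (hmaps : Set.MapsTo φ (Metric.ball (0 : ℂ) 1) G2)
    (h0 : φ 0 = (0, 0))
    (lam : ℂ) (hlam : ‖lam‖ = 1)
    (hext : ∀ᶠ z in nhds lam, DifferentiableAt ℂ φ z)
    (hval : φ lam = (2 * α, α ^ 2)) :
    deriv (fun z => (φ z).1) lam = conj α * deriv (fun z => (φ z).2) lam ∧
      ∃ t : ℝ, (t : ℂ) = lam * conj α * deriv (fun z => (φ z).1) lam ∧ 2 ≤ t := by
  have hφ : DifferentiableAt ℂ φ lam := hext.self_of_nhds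
  obtain ⟨hSP, him, hre⟩ := eq_and_two_le_of_forall_real
    (im_eq_zero_and_two_le_re_of_mapsTo_G2 hα hd hmaps h0 hlam hval
      hφ.fst.hasDerivAt hφ.snd.hasDerivAt)
  exact ⟨hSP, _, Complex.ext (by simp) (by simp [him]), hre⟩
end
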